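/- arXiv:2304.01132 — 4 statements merged into one kernel-verified Lean document; each statement's English description precedes it below -/
import Mathlib

section
/- Let T_BCF(x) = {1/(1−x)} on [0,1], E = [1/2, 1], φ_E the first return time of T_BCF to E, g(x) = ⌊1/(1−x)⌋ + 1, and μ the T_BCF-invariant measure with density 1/(x log 2). Then for M, N ∈ ℕ, μ( {g > N} ∩ {φ_E > M} ) ≍ μ(g > N)·μ(φ_E > M), i.e. there exist C > 0 and N_0 such that C^{−1}·μ({g > N} ∩ {φ_E > M}) ≤ μ(g > N)·μ(φ_E > M) ≤ C·μ({g > N} ∩ {φ_E > M}) for all M, N ≥ N_0. -/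
open MeasureTheory Filter Set Asymptotics

noncomputable section

namespace InfErg

variable {X : Type*} [MeasurableSpace X]

/-- The first return time `φ_E(x) = min {k ≥ 1 : T^k x ∈ E}`. -/
def returnTime (T : X → X) (E : Set X) (x : X) : ℕ :=
  sInf {k : ℕ | 1 ≤ k ∧ T^[k] x ∈ E}

/-- The hitting time `h_E(x) = min {k ≥ 0 : T^k x ∈ E}`. -/
def hitTime (T : X → X) (E : Set X) (x : X) : ℕ :=
  sInf {k : ℕ | T^[k] x ∈ E}

/-- The level set `A_n = {x ∈ E : φ_E(x) = n}`. -/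
def levelSet (T : X → X) (E : Set X) (n : ℕ) : Set X :=
  {x | x ∈ E ∧ returnTime T E x = n}

/-- The super-level set `A_{>n} = {x ∈ E : φ_E(x) > n}`. -/
def superLevelSet (T : X → X) (E : Set X) (n : ℕ) : Set X :=
  {x | x ∈ E ∧ n < returnTime T E x}

/-- The wandering rate `w_n(E) = ∑_{k=0}^{n-1} μ(A_{>k})`. -/
def wanderingRate (T : X → X) (E : Set X) (μ : Measure X) (n : ℕ) : ℝ :=
  ∑ k ∈ Finset.range n, (μ (superLevelSet T E k)).toReal

/-- `α(n) = n / w_n(E)`. -/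
def alphaSeq (T : X → X) (E : Set X) (μ : Measure X) (n : ℕ) : ℝ :=
  (n : ℝ) / wanderingRate T E μ n

/-- The induced map `T_E(x) = T^{φ_E(x)}(x)`. -/
def inducedMap (T : X → X) (E : Set X) (x : X) : X :=
  T^[returnTime T E x] x

/-- The Birkhoff sum `S_N g(x) = ∑_{n=1}^N g(T^{n-1} x)`. -/
def birkhoffSum (T : X → X) (g : X → ℝ) (N : ℕ) (x : X) : ℝ :=
  ∑ i ∈ Finset.range N, g (T^[i] x)

/-- `max_{1 ≤ k ≤ N} g(T^{k-1} x)`. -/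
def birkhoffMax (T : X → X) (g : X → ℝ) (N : ℕ) (x : X) : ℝ :=
  sSup ((fun i => g (T^[i] x)) '' {i : ℕ | i < N})

/-- The trimmed Birkhoff sum `S^r_N g(x)`: the Birkhoff sum with the `r` largest
summands among `g(x), g(Tx), …, g(T^{N-1}x)` removed; equivalently, the smallest
possible sum of `N - r` of these summands. -/
def trimmedBirkhoffSum (T : X → X) (g : X → ℝ) (r N : ℕ) (x : X) : ℝ :=
  sInf {s : ℝ | ∃ A : Finset ℕ, A ⊆ Finset.range N ∧ A.card = N - r ∧
    s = ∑ i ∈ A, g (T^[i] x)}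

/-- The trimmed sum `S_N^r(ω)` of a sequence of random variables: the sum of
`Y_1(ω), …, Y_N(ω)` with the `r` largest entries removed; equivalently, the
smallest possible sum of `N - r` of these entries. -/
def trimmedSumSeq {Ω : Type*} (Y : ℕ → Ω → ℝ) (r N : ℕ) (ω : Ω) : ℝ :=
  sInf {s : ℝ | ∃ A : Finset ℕ, A ⊆ Finset.range N ∧ A.card = N - r ∧
    s = ∑ i ∈ A, Y i ω}

/-- The `r`-th maximum `M^r_N(ω)` among `Y_1(ω), …, Y_N(ω)`. -/
def rthMaxSeq {Ω : Type*} (Y : ℕ → Ω → ℝ) (r N : ℕ) (ω : Ω) : ℝ :=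
  sSup {m : ℝ | ∃ A : Finset ℕ, A ⊆ Finset.range N ∧ A.card = r ∧ ∀ i ∈ A, m ≤ Y i ω}

/-- `m(N,E,x) = 1 + max {k ≥ 1 : ∃ ℓ ∈ {1,…,N+1}, T^{ℓ+j} x ∉ E ∀ j = 0,…,k-1}`,
the longest excursion out of `E` beginning in the first `N` steps. -/
def mExc (T : X → X) (E : Set X) (N : ℕ) (x : X) : ℕ :=
  1 + sSup {k : ℕ | 1 ≤ k ∧ ∃ l : ℕ, 1 ≤ l ∧ l ≤ N + 1 ∧ ∀ j < k, T^[l + j] x ∉ E}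

/-- `f : ℕ → ℝ` is slowly varying: `f(⌊dN⌋)/f(N) → 1` for all `d > 0`. -/
def SlowlyVarying (f : ℕ → ℝ) : Prop :=
  ∀ d : ℝ, 0 < d → Tendsto (fun N : ℕ => f ⌊d * (N : ℝ)⌋₊ / f N) atTop (nhds 1)

/-- `b` is an asymptotic inverse of `a`. -/
def IsAsymptoticInverse (a b : ℝ → ℝ) : Prop :=
  Tendsto (fun y => a (b y) / y) atTop (nhds 1) ∧
  Tendsto (fun y => b (a y) / y) atTop (nhds 1)

/-- `b` is an asymptotic inverse of `a` (sequence version). -/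
def IsAsymptoticInverseSeq (a b : ℕ → ℝ) : Prop :=
  Tendsto (fun n : ℕ => a ⌊b n⌋₊ / (n : ℝ)) atTop (nhds 1) ∧
  Tendsto (fun n : ℕ => b ⌊a n⌋₊ / (n : ℝ)) atTop (nhds 1)

/-- The σ-field `F_h^k` generated by the random variables `Y_m`, `m ∈ s`. -/
def sigmaGen {Ω : Type*} (Y : ℕ → Ω → ℝ) (s : Set ℕ) : MeasurableSpace Ω :=
  ⨆ m ∈ s, MeasurableSpace.comap (Y m) (inferInstance : MeasurableSpace ℝ)

/-- The sequence `(Y_n)` is ψ-mixing with mixing coefficients `ψ`: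
`|P(B ∩ C)/(P(B)P(C)) - 1| ≤ ψ(n)` for all `B ∈ F_0^j`, `C ∈ F_{j+n}^∞` of
positive measure. -/
def PsiMixingWith {Ω : Type*} [MeasurableSpace Ω] (P : Measure Ω) (Y : ℕ → Ω → ℝ)
    (ψ : ℕ → ℝ) : Prop :=
  ∀ n j : ℕ, ∀ B C : Set Ω,
    MeasurableSet[sigmaGen Y (Set.Icc 0 j)] B →
    MeasurableSet[sigmaGen Y (Set.Ici (j + n))] C →
    0 < P B → 0 < P C →
    |(P (B ∩ C)).toReal / ((P B).toReal * (P C).toReal) - 1| ≤ ψ n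

/-- `Pt` is the partition `P_E` of `E` induced by `T_E`: a partition of `E`
(mod μ) into measurable sets, each of which is mapped onto `E` by `T_E` a.s.,
and which is the finest such partition. -/
structure IsInducedPartition (T : X → X) (E : Set X) (μ : Measure X)
    (Pt : Set (Set X)) : Prop where
  subset_base : ∀ p ∈ Pt, p ⊆ E
  measurableSet : ∀ p ∈ Pt, MeasurableSet p
  pairwiseDisjoint : Pt.PairwiseDisjoint id
  cover : μ (E \ ⋃₀ Pt) = 0
  onto : ∀ p ∈ Pt, μ (E \ inducedMap T E '' p) = 0
  finest : ∀ Qt : Set (Set X), (∀ q ∈ Qt, q ⊆ E) → (∀ q ∈ Qt, MeasurableSet q) →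
    Qt.PairwiseDisjoint id → μ (E \ ⋃₀ Qt) = 0 →
    (∀ q ∈ Qt, μ (E \ inducedMap T E '' q) = 0) →
    ∀ p ∈ Pt, ∃ q ∈ Qt, μ (p \ q) = 0

/-- `f` is (piecewise) constant on each element of the partition `Pt`. -/
def ConstantOn (Pt : Set (Set X)) (f : X → ℝ) : Prop :=
  ∀ p ∈ Pt, ∀ x ∈ p, ∀ y ∈ p, f x = f y

/-- `E` induces rapid ψ-mixing (relative to the induced partition `Pt = P_E`):
`T_E(A_n) = E` a.s. for all `n ≥ 1`, and for every sequence `(φ_n)` of functions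
piecewise constant on `Pt`, the sequence `(φ_n ∘ T_E^{n-1})` is ψ-mixing with
coefficients `ψ(n)` satisfying `∑ ψ(n)/n < ∞`. -/
def InducesRapidPsiMixing (T : X → X) (E : Set X) (μ : Measure X)
    (Pt : Set (Set X)) : Prop :=
  (∀ n : ℕ, 1 ≤ n → μ (E \ inducedMap T E '' levelSet T E n) = 0) ∧
  ∀ φ : ℕ → X → ℝ, (∀ n, ConstantOn Pt (φ n)) →
    ∃ ψ : ℕ → ℝ, (∀ n, 0 ≤ ψ n) ∧ Tendsto ψ atTop (nhds 0) ∧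
      Summable (fun n : ℕ => ψ n / (n : ℝ)) ∧
      PsiMixingWith (μ.restrict E) (fun n x => φ n ((inducedMap T E)^[n] x)) ψ

/-- The backward continued fraction map `T_BCF(x) = {1/(1-x)}`. -/
def Tbcf (x : ℝ) : ℝ := Int.fract (1 / (1 - x))

/-- `E = [1/2, 1]` for the backward continued fraction map. -/
def Ebcf : Set ℝ := Set.Icc (1/2 : ℝ) 1

/-- The `T_BCF`-invariant measure with density `1/(x log 2)` on `[0,1]`. -/
def muBCF : Measure ℝ :=
  (volume.restrict (Set.Icc (0:ℝ) 1)).withDensity fun x =>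
    ENNReal.ofReal (1 / (x * Real.log 2))

/-- The observable `g(x) = ⌊1/(1-x)⌋ + 1` for the backward continued fractions. -/
def gBCF (x : ℝ) : ℝ := (⌊1 / (1 - x)⌋ : ℝ) + 1

open Classical in
/-- The even-integer continued fraction map: `T_ECF(x) = 1 - {1/x}` on
`⋃_{k ≥ 1} (1/(2k), 1/(2k-1))` and `T_ECF(x) = {1/x}` otherwise. -/
def Tecf (x : ℝ) : ℝ :=
  if x ∈ ⋃ k : ℕ, Set.Ioo (1 / (2 * (k : ℝ) + 2)) (1 / (2 * (k : ℝ) + 1))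
  then 1 - Int.fract (1 / x) else Int.fract (1 / x)

/-- `E = [0, 1/2]` for the even-integer continued fraction map. -/
def Eecf : Set ℝ := Set.Icc (0:ℝ) (1/2)

/-- The `T_ECF`-invariant measure with density `1/((1-x²) log √3)` on `[0,1]`. -/
def muECF : Measure ℝ :=
  (volume.restrict (Set.Icc (0:ℝ) 1)).withDensity fun x =>
    ENNReal.ofReal (1 / ((1 - x ^ 2) * Real.log (Real.sqrt 3)))

/-- The observable `g(x) = 2⌊1/(2x) + 1/2⌋` for the even-integer continued fractions. -/
def gECF (x : ℝ) : ℝ := 2 * (⌊1 / (2 * x) + 1 / 2⌋ : ℝ)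

/-- The observable `g̃(x) = ⌊1/x⌋` for the even-integer continued fractions. -/
def gtECF (x : ℝ) : ℝ := (⌊1 / x⌋ : ℝ)

/-! Auxiliary lemmas -/


lemma Tbcf_zero : Tbcf 0 = 0 := by
  simp [Tbcf]

lemma Tbcf_iter_zero (k : ℕ) : Tbcf^[k] (0:ℝ) = 0 :=
  Function.iterate_fixed Tbcf_zero k

lemma Tbcf_one : Tbcf 1 = 0 := by
  simp [Tbcf]

lemma Tbcf_nonneg (x : ℝ) : 0 ≤ Tbcf x := Int.fract_nonneg _

lemma Tbcf_lt_one (x : ℝ) : Tbcf x < 1 := Int.fract_lt_one _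

lemma Tbcf_low {z : ℝ} (h0 : 0 ≤ z) (h1 : z < 1/2) : Tbcf z = z / (1 - z) := by
  have hz : (0:ℝ) < 1 - z := by linarith
  have h2 : (1:ℝ) ≤ 1 / (1 - z) := by
    rw [le_div_iff₀ hz]; linarith
  have h3 : 1 / (1 - z) < 2 := by
    rw [div_lt_iff₀ hz]; linarith
  have hf : ⌊(1 / (1 - z) : ℝ)⌋ = 1 := by
    rw [Int.floor_eq_iff]
    constructor <;> push_cast <;> linarith
  rw [Tbcf, Int.fract, hf]
  push_cast
  field_simp
  ring

lemma Tbcf_iter_low {y : ℝ} (hy : 0 < y) :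
    ∀ k : ℕ, (k + 1 : ℝ) * y < 1 → Tbcf^[k] y = y / (1 - k * y) := by
  intro k
  induction k with
  | zero => intro _; simp
  | succ k ih =>
    intro hk
    have hk' : (k + 1 : ℝ) * y < 1 := by push_cast at hk ⊢; nlinarith
    have h1k : (0:ℝ) < 1 - k * y := by push_cast at hk'; nlinarith
    have hval : Tbcf^[k] y = y / (1 - k * y) := ih hk'
    have hlt : y / (1 - k * y) < 1/2 := by
      rw [div_lt_iff₀ h1k]; push_cast at hk; nlinarith
    have hge : 0 ≤ y / (1 - k * y) := by positivity
    rw [Function.iterate_succ_apply', hval, Tbcf_low hge hlt]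
    have h2 : (0:ℝ) < 1 - (k+1) * y := by push_cast at hk; nlinarith
    have h3 : 1 - y / (1 - ↑k * y) = (1 - (k+1)*y) / (1 - k*y) := by
      rw [eq_div_iff (ne_of_gt h1k), sub_mul, div_mul_cancel₀ _ (ne_of_gt h1k)]; ring
    rw [h3, div_div_div_cancel_right₀]
    · push_cast; ring_nf
    · exact ne_of_gt h1k

/-- First entry of the forward orbit of `y ∈ (0,1/2)` into `E`. -/
lemma exists_entry {y : ℝ} (hy0 : 0 < y) (hy2 : y < 1/2) :
    ∃ j : ℕ, 1 ≤ j ∧ (1:ℝ) ≤ (j + 2) * y ∧ ((j + 1 : ℝ) * y < 1) ∧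
      Tbcf^[j] y ∈ Ebcf ∧ ∀ i < j, (i + 2 : ℝ) * y < 1 := by
  have hex : ∃ j : ℕ, (1:ℝ) ≤ (j + 2) * y := by
    obtain ⟨n, hn⟩ := exists_nat_ge (1/y)
    exact ⟨n, by rw [div_le_iff₀ hy0] at hn; nlinarith⟩
  classical
  set j := Nat.find hex with hj
  have hPj : (1:ℝ) ≤ (j + 2) * y := Nat.find_spec hex
  have hnot : ∀ i < j, ¬ ((1:ℝ) ≤ (i + 2) * y) := fun i hi => Nat.find_min hex hi
  have hj1 : 1 ≤ j := by
    by_contra h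
    have := hPj
    interval_cases j
    · push_cast at hPj; nlinarith
  have hjy : (j + 1 : ℝ) * y < 1 := by
    have := hnot (j - 1) (by omega)
    push_neg at this
    have hcast : ((j - 1 : ℕ) : ℝ) = (j : ℝ) - 1 := by
      have : (1:ℕ) ≤ j := hj1
      push_cast [Nat.cast_sub this]
      ring
    rw [hcast] at this
    nlinarith
  refine ⟨j, hj1, hPj, hjy, ?_, fun i hi => by have := hnot i hi; push_neg at this; linarith⟩
  have h1j : (0:ℝ) < 1 - j * y := by nlinarith
  rw [Tbcf_iter_low hy0 j hjy]
  constructor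
  · rw [le_div_iff₀ h1j]; nlinarith
  · rw [div_le_one h1j]; nlinarith

lemma mem_superLevel_iff {M : ℕ} {x : ℝ} :
    x ∈ superLevelSet Tbcf Ebcf M ↔ x ∈ Ebcf ∧
      (∃ k, 1 ≤ k ∧ Tbcf^[k] x ∈ Ebcf) ∧ ∀ k, 1 ≤ k → k ≤ M → Tbcf^[k] x ∉ Ebcf := by
  classical
  set S : Set ℕ := {k : ℕ | 1 ≤ k ∧ Tbcf^[k] x ∈ Ebcf} with hS
  constructor
  · rintro ⟨hxE, hM⟩
    have hne : S.Nonempty := by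
      by_contra h
      rw [Set.not_nonempty_iff_eq_empty] at h
      have : returnTime Tbcf Ebcf x = 0 := by
        rw [returnTime, ← hS, h, Nat.sInf_empty]
      omega
    have hmem := Nat.sInf_mem hne
    refine ⟨hxE, ⟨sInf S, hmem.1, hmem.2⟩, fun k hk1 hkM hkE => ?_⟩
    have : sInf S ≤ k := Nat.sInf_le ⟨hk1, hkE⟩
    have : M < sInf S := hM
    omega
  · rintro ⟨hxE, ⟨k, hk1, hkE⟩, hall⟩
    refine ⟨hxE, ?_⟩
    have hne : S.Nonempty := ⟨k, hk1, hkE⟩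
    have hmem := Nat.sInf_mem hne
    show M < sInf S
    by_contra h
    push_neg at h
    exact hall _ hmem.1 h hmem.2

/-- Sufficient condition for membership in the super-level set. -/
lemma mem_superLevel_of {M : ℕ} {x : ℝ} (hx : x ∈ Set.Ico (1/2:ℝ) 1)
    (hy0 : 0 < Tbcf x) (hyM : ((M:ℝ) + 2) * Tbcf x < 1) :
    x ∈ superLevelSet Tbcf Ebcf M := by
  set y := Tbcf x with hy
  have hy2 : y < 1/2 := by nlinarith [hy0, Nat.cast_nonneg (α := ℝ) M]
  rw [mem_superLevel_iff]
  have hiter : ∀ k : ℕ, Tbcf^[k+1] x = Tbcf^[k] y := fun k => by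
    rw [Function.iterate_succ_apply]
  refine ⟨⟨hx.1, le_of_lt hx.2⟩, ?_, ?_⟩
  · obtain ⟨j, hj1, _, _, hjE, _⟩ := exists_entry hy0 hy2
    exact ⟨j + 1, by omega, by rw [hiter]; exact hjE⟩
  · intro k hk1 hkM hkE
    obtain ⟨i, rfl⟩ : ∃ i, k = i + 1 := ⟨k - 1, by omega⟩
    rw [hiter] at hkE
    have hik : (i + 1 : ℝ) * y < 1 := by
      have : (i : ℝ) + 1 ≤ (M : ℝ) := by exact_mod_cast Nat.succ_le_of_lt (by omega)
      nlinarith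
    rw [Tbcf_iter_low hy0 i hik] at hkE
    have h1i : (0:ℝ) < 1 - i * y := by nlinarith
    have : y / (1 - i * y) < 1/2 := by
      rw [div_lt_iff₀ h1i]
      have : (i : ℝ) + 2 ≤ (M : ℝ) + 1 := by exact_mod_cast by omega
      nlinarith
    have h12 : (1/2:ℝ) ≤ y / (1 - ↑i * y) := hkE.1
    linarith

/-- Necessary condition for membership in the super-level set. -/
lemma superLevel_subset {M : ℕ} (hM : 1 ≤ M) {x : ℝ} (hx : x ∈ superLevelSet Tbcf Ebcf M) :
    x ∈ Set.Ico (1/2:ℝ) 1 ∧ 0 < Tbcf x ∧ ((M:ℝ) + 1) * Tbcf x < 1 := by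
  rw [mem_superLevel_iff] at hx
  obtain ⟨hxE, ⟨k, hk1, hkE⟩, hall⟩ := hx
  set y := Tbcf x with hy
  have hiter : ∀ k : ℕ, Tbcf^[k+1] x = Tbcf^[k] y := fun k => by
    rw [Function.iterate_succ_apply]
  have hy0 : 0 < y := by
    rcases lt_or_eq_of_le (Tbcf_nonneg x) with h | h
    · exact h
    · exfalso
      obtain ⟨i, rfl⟩ : ∃ i, k = i + 1 := ⟨k - 1, by omega⟩
      have hy00 : y = 0 := hy.trans h.symm
      rw [hiter, hy00, Tbcf_iter_zero] at hkE
      have h12 : (1/2:ℝ) ≤ 0 := hkE.1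
      linarith
  have hy2 : y < 1/2 := by
    by_contra h
    push_neg at h
    exact hall 1 le_rfl hM (by
      rw [hiter 0]
      exact ⟨by simpa using h, le_of_lt (by simpa using Tbcf_lt_one x)⟩)
  have hx1 : x < 1 := by
    rcases lt_or_eq_of_le hxE.2 with h | h
    · exact h
    · exfalso; rw [h] at hy; rw [Tbcf_one] at hy; exact lt_irrefl 0 (hy ▸ hy0)
  refine ⟨⟨hxE.1, hx1⟩, hy0, ?_⟩
  by_contra h
  push_neg at h
  obtain ⟨j, hj1, hjP, hjy, hjE, hsmall⟩ := exists_entry hy0 hy2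
  have hjM : j + 1 ≤ M := by
    by_contra hc
    push_neg at hc
    have : M ≤ j - 1 ∨ M - 1 < j := by omega
    have hMj : (M:ℝ) - 1 < (j:ℝ) ∨ True := Or.inr trivial
    -- j is minimal with (j+2)y ≥ 1; since (M+1)y ≥ 1 we get j ≤ M-1
    have : ((M - 1 : ℕ) : ℝ) + 2 = (M:ℝ) + 1 := by
      push_cast [Nat.cast_sub hM]; ring
    have hPM : (1:ℝ) ≤ (((M - 1 : ℕ) : ℝ) + 2) * y := by rw [this]; exact h
    have hlt : M - 1 < j := by omega
    have := hsmall (M-1) hlt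
    linarith
  exact hall (j+1) (by omega) hjM (by rw [hiter]; exact hjE)

/-! branch and interval lemmas -/

lemma Tbcf_branch {x : ℝ} {n : ℕ} (h1 : (n:ℝ) ≤ 1/(1-x)) (h2 : 1/(1-x) < (n:ℝ)+1) :
    Tbcf x = 1/(1-x) - n := by
  have hf : ⌊(1/(1-x) : ℝ)⌋ = (n:ℤ) := by
    rw [Int.floor_eq_iff]
    constructor <;> push_cast <;> linarith
  rw [Tbcf, Int.fract, hf]
  push_cast
  ring

lemma piece_subset {n : ℕ} (hn : 2 ≤ n) {δ : ℝ} (hδ0 : 0 < δ) (hδ1 : δ ≤ 1)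
    {x : ℝ} (hx : x ∈ Set.Ioo (1 - 1/(n:ℝ)) (1 - 1/((n:ℝ) + δ))) :
    x ∈ Set.Ico (1/2:ℝ) 1 ∧ 0 < Tbcf x ∧ Tbcf x < δ ∧ 1 - 1/(n:ℝ) ≤ x := by
  have hn2 : (2:ℝ) ≤ n := by exact_mod_cast hn
  have hnpos : (0:ℝ) < n := by linarith
  have hx1 : 1 - 1/(n:ℝ) < x := hx.1
  have hx2 : x < 1 - 1/((n:ℝ) + δ) := hx.2
  have hδn : (0:ℝ) < (n:ℝ) + δ := by linarith
  have hxlt1 : x < 1 := by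
    have : (0:ℝ) < 1/((n:ℝ) + δ) := by positivity
    linarith
  have h1x : (0:ℝ) < 1 - x := by linarith
  have hinvn : (n:ℝ) * (1/(n:ℝ)) = 1 := by field_simp
  have hinvδ : ((n:ℝ) + δ) * (1/((n:ℝ) + δ)) = 1 := by field_simp
  have ht1 : (n:ℝ) < 1/(1-x) := by
    rw [lt_div_iff₀ h1x]; nlinarith
  have ht2 : 1/(1-x) < (n:ℝ) + δ := by
    rw [div_lt_iff₀ h1x]; nlinarith
  have hT : Tbcf x = 1/(1-x) - n := Tbcf_branch (le_of_lt ht1) (by linarith)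
  have hhalf : (1/2:ℝ) ≤ 1 - 1/(n:ℝ) := by
    have : (1:ℝ)/(n:ℝ) ≤ 1/2 := by
      rw [div_le_div_iff₀ hnpos (by norm_num)]; linarith
    linarith
  exact ⟨⟨by linarith, hxlt1⟩, by rw [hT]; linarith, by rw [hT]; linarith, le_of_lt hx1⟩

lemma gset_eq {N : ℕ} (hN : 2 ≤ N) :
    {x : ℝ | x ∈ Set.Icc (0:ℝ) 1 ∧ (N : ℝ) < gBCF x} = Set.Ico (1 - 1/(N:ℝ)) 1 := by
  have hN2 : (2:ℝ) ≤ N := by exact_mod_cast hN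
  have hNpos : (0:ℝ) < N := by linarith
  ext x
  simp only [Set.mem_setOf_eq, Set.mem_Icc, Set.mem_Ico, gBCF]
  constructor
  · rintro ⟨⟨h0, h1⟩, hg⟩
    have hz : ((N:ℤ) : ℝ) < ((⌊1/(1-x)⌋ + 1 : ℤ) : ℝ) := by push_cast; linarith
    have hz' : (N:ℤ) ≤ ⌊1/(1-x)⌋ := by
      have h2 : (N:ℤ) < ⌊1/(1-x)⌋ + 1 := by exact_mod_cast hz
      omega
    have ht : (N:ℝ) ≤ 1/(1-x) := by
      have := Int.le_floor.mp hz'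
      exact_mod_cast le_trans (by exact_mod_cast le_refl ((N:ℤ):ℝ)) this
    have hxlt1 : x < 1 := by
      rcases lt_or_eq_of_le h1 with h | h
      · exact h
      · exfalso; rw [h] at ht; norm_num at ht; linarith
    have h1x : (0:ℝ) < 1 - x := by linarith
    have : (N:ℝ) * (1 - x) ≤ 1 := by
      rw [le_div_iff₀ h1x] at ht; linarith
    constructor
    · have : 1 - x ≤ 1/(N:ℝ) := by
        rw [le_div_iff₀ hNpos]; nlinarith
      linarith
    · exact hxlt1
  · rintro ⟨hx1, hx2⟩
    have h1x : (0:ℝ) < 1 - x := by linarith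
    have hinv : (0:ℝ) < 1/(N:ℝ) := by positivity
    have ht : (N:ℝ) ≤ 1/(1-x) := by
      rw [le_div_iff₀ h1x]
      have hinvN : (N:ℝ) * (1/(N:ℝ)) = 1 := by field_simp
      nlinarith
    have hfl : (N:ℤ) ≤ ⌊1/(1-x)⌋ := Int.le_floor.mpr (by exact_mod_cast ht)
    have hfl' : (N:ℝ) ≤ (⌊1/(1-x)⌋ : ℝ) := by exact_mod_cast hfl
    refine ⟨⟨?_, le_of_lt hx2⟩, by linarith⟩
    have : (1:ℝ)/(N:ℝ) ≤ 1/2 := by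
      rw [div_le_div_iff₀ hNpos (by norm_num)]; linarith
    linarith

lemma cover_lemma {N K : ℕ} (hN : 2 ≤ N) (hNK : N ≤ K) {δ : ℝ} (hδ0 : 0 < δ) (hδ1 : δ ≤ 1)
    {x : ℝ} (hx1 : 1 - 1/(N:ℝ) ≤ x) (hx2 : x < 1) (hf : Tbcf x < δ) :
    x ∈ Set.Icc (1 - 1/(K:ℝ)) 1 ∪
      ⋃ m ∈ Finset.range (K - N), Set.Icc (1 - 1/((N+m : ℕ):ℝ)) (1 - 1/(((N+m : ℕ):ℝ) + δ)) := by
  rcases le_or_gt (1 - 1/(K:ℝ)) x with hK | hK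
  · exact Or.inl ⟨hK, le_of_lt hx2⟩
  · right
    have hN2 : (2:ℝ) ≤ N := by exact_mod_cast hN
    have hNpos : (0:ℝ) < N := by linarith
    have h1x : (0:ℝ) < 1 - x := by linarith
    set t := 1/(1-x) with htdef
    have htx : t * (1 - x) = 1 := by rw [htdef]; field_simp
    have htN : (N:ℝ) ≤ t := by
      rw [htdef, le_div_iff₀ h1x]
      have hinvN : (N:ℝ) * (1/(N:ℝ)) = 1 := by field_simp
      nlinarith
    have hKpos : (0:ℝ) < K := by
      have : (0:ℕ) < K := by omega
      exact_mod_cast this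
    have htK : t < (K:ℝ) := by
      have h1K : (1:ℝ)/(K:ℝ) < 1 - x := by
        by_contra h
        push_neg at h
        have : x ≤ 1 - 1/(K:ℝ) := by linarith
        rcases lt_or_eq_of_le this with h' | h'
        · linarith
        · rw [h'] at hK; exact lt_irrefl _ hK
      rw [htdef, div_lt_iff₀ h1x]
      have : (K:ℝ) * (1/(K:ℝ)) = 1 := by field_simp
      nlinarith
    set n : ℕ := ⌊t⌋.toNat with hndef
    have hfl0 : (0:ℤ) ≤ ⌊t⌋ := by
      have : ((0:ℤ):ℝ) ≤ t := by push_cast; linarith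
      exact Int.le_floor.mpr this
    have hncast : (n:ℝ) = (⌊t⌋ : ℝ) := by
      rw [hndef]
      norm_cast
      omega
    have hnt : (n:ℝ) ≤ t := by rw [hncast]; exact Int.floor_le t
    have htn1 : t < (n:ℝ) + 1 := by rw [hncast]; exact Int.lt_floor_add_one t
    have hTx : Tbcf x = t - n := by
      rw [Tbcf, ← htdef, Int.fract, hncast]
    have htδ : t < (n:ℝ) + δ := by rw [hTx] at hf; linarith
    have hnN : N ≤ n := by
      by_contra h
      push_neg at h
      have h' : (n:ℝ) + 1 ≤ (N:ℝ) := by exact_mod_cast h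
      linarith
    have hnK : n < K := by
      by_contra h
      push_neg at h
      have : (K:ℝ) ≤ (n:ℝ) := by exact_mod_cast h
      linarith [hnt, htK]
    have hnpos : (0:ℝ) < n := by
      have : (2:ℝ) ≤ (n:ℝ) := le_trans hN2 (by exact_mod_cast hnN)
      linarith
    refine Set.mem_biUnion (Finset.mem_range.mpr (by omega : n - N < K - N)) ?_
    have hNn : (N + (n - N) : ℕ) = n := by omega
    rw [hNn]
    constructor
    · have : 1 - x ≤ 1/(n:ℝ) := by
        rw [le_div_iff₀ hnpos]; nlinarith
      linarith
    · have hδn : (0:ℝ) < (n:ℝ) + δ := by linarith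
      have : (1:ℝ)/((n:ℝ) + δ) ≤ 1 - x := by
        rw [div_le_iff₀ hδn]; nlinarith
      linarith

/-! measure estimates -/

lemma log2_pos : (0:ℝ) < Real.log 2 := Real.log_pos one_lt_two

lemma muBCF_le_vol {S : Set ℝ} (hS : MeasurableSet S) (hsub : S ⊆ Set.Icc (1/2:ℝ) 1) :
    muBCF S ≤ ENNReal.ofReal (2 / Real.log 2) * volume S := by
  have h01 : S ⊆ Set.Icc (0:ℝ) 1 := hsub.trans (Set.Icc_subset_Icc (by norm_num) le_rfl)
  rw [muBCF, withDensity_apply _ hS, Measure.restrict_restrict hS, Set.inter_eq_left.mpr h01]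
  calc ∫⁻ x in S, ENNReal.ofReal (1 / (x * Real.log 2)) ∂volume
      ≤ ∫⁻ _ in S, ENNReal.ofReal (2 / Real.log 2) ∂volume := by
        refine setLIntegral_mono' hS (fun x hx => ENNReal.ofReal_le_ofReal ?_)
        have h1 : (1/2:ℝ) ≤ x := (hsub hx).1
        rw [div_le_div_iff₀ (by positivity) log2_pos]
        nlinarith [log2_pos]
    _ = ENNReal.ofReal (2 / Real.log 2) * volume S := setLIntegral_const S _

lemma vol_le_muBCF {S : Set ℝ} (hS : MeasurableSet S) (hsub : S ⊆ Set.Icc (1/2:ℝ) 1) :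
    ENNReal.ofReal (1 / Real.log 2) * volume S ≤ muBCF S := by
  have h01 : S ⊆ Set.Icc (0:ℝ) 1 := hsub.trans (Set.Icc_subset_Icc (by norm_num) le_rfl)
  rw [muBCF, withDensity_apply _ hS, Measure.restrict_restrict hS, Set.inter_eq_left.mpr h01]
  calc ENNReal.ofReal (1 / Real.log 2) * volume S
      = ∫⁻ _ in S, ENNReal.ofReal (1 / Real.log 2) ∂volume := (setLIntegral_const S _).symm
    _ ≤ ∫⁻ x in S, ENNReal.ofReal (1 / (x * Real.log 2)) ∂volume := by
        refine setLIntegral_mono' hS (fun x hx => ENNReal.ofReal_le_ofReal ?_)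
        have h1 : (1/2:ℝ) ≤ x := (hsub hx).1
        have h2 : x ≤ 1 := (hsub hx).2
        rw [div_le_div_iff₀ log2_pos (by positivity)]
        nlinarith [log2_pos]

/-- The upper bound via the covering by branch intervals. -/
lemma vol_upper {N K : ℕ} (hN : 2 ≤ N) (hNK : N ≤ K) {δ : ℝ} (hδ0 : 0 < δ) (hδ1 : δ ≤ 1)
    {S : Set ℝ}
    (hsub : ∀ x ∈ S, 1 - 1/(N:ℝ) ≤ x ∧ x < 1 ∧ Tbcf x < δ) :
    muBCF S ≤ ENNReal.ofReal (2 / Real.log 2) *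
      ENNReal.ofReal (1/(K:ℝ) + δ/((N:ℝ) - 1)) := by
  have hN2 : (2:ℝ) ≤ N := by exact_mod_cast hN
  have hK2 : (2:ℝ) ≤ K := by exact_mod_cast le_trans hN hNK
  set C : Set ℝ := Set.Icc (1 - 1/(K:ℝ)) 1 ∪
      ⋃ m ∈ Finset.range (K - N), Set.Icc (1 - 1/((N+m : ℕ):ℝ)) (1 - 1/(((N+m : ℕ):ℝ) + δ))
      with hC
  have hSC : S ⊆ C := by
    intro x hx
    obtain ⟨h1, h2, h3⟩ := hsub x hx
    exact cover_lemma hN hNK hδ0 hδ1 h1 h2 h3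
  have hCmeas : MeasurableSet C := by
    refine MeasurableSet.union measurableSet_Icc ?_
    exact (Finset.range (K - N)).measurableSet_biUnion (fun m _ => measurableSet_Icc)
  have hCsub : C ⊆ Set.Icc (1/2:ℝ) 1 := by
    rintro x (hx | hx)
    · refine ⟨?_, hx.2⟩
      have : (1:ℝ)/(K:ℝ) ≤ 1/2 := by
        rw [div_le_div_iff₀ (by linarith) (by norm_num)]; linarith
      linarith [hx.1]
    · simp only [Set.mem_iUnion] at hx
      obtain ⟨m, hm, hx1, hx2⟩ := hx
      have hn2 : (2:ℝ) ≤ ((N+m : ℕ):ℝ) := by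
        have : (N:ℝ) ≤ ((N+m:ℕ):ℝ) := by exact_mod_cast Nat.le_add_right N m
        linarith
      have h1 : (1:ℝ)/((N+m:ℕ):ℝ) ≤ 1/2 := by
        rw [div_le_div_iff₀ (by linarith) (by norm_num)]; linarith
      have h2 : (0:ℝ) < ((N+m:ℕ):ℝ) + δ := by linarith
      have h3 : (0:ℝ) < 1/(((N+m:ℕ):ℝ) + δ) := by positivity
      exact ⟨by linarith, by linarith⟩
  refine le_trans (measure_mono hSC) (le_trans (muBCF_le_vol hCmeas hCsub) ?_)
  refine mul_le_mul_right ?_ _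
  -- bound the volume of the cover
  have hvol : volume C ≤ ENNReal.ofReal (1/(K:ℝ)) +
      ∑ m ∈ Finset.range (K - N),
        ENNReal.ofReal ((1 - 1/(((N+m : ℕ):ℝ) + δ)) - (1 - 1/((N+m : ℕ):ℝ))) := by
    refine le_trans (measure_union_le _ _) ?_
    refine add_le_add ?_ ?_
    · rw [Real.volume_Icc]
      exact ENNReal.ofReal_le_ofReal (le_of_eq (by ring))
    · refine le_trans (measure_biUnion_finset_le _ _) ?_
      refine Finset.sum_le_sum (fun m _ => le_of_eq ?_)
      rw [Real.volume_Icc]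
  refine le_trans hvol ?_
  have hlen : ∀ m : ℕ, (0:ℝ) ≤ (1 - 1/(((N+m : ℕ):ℝ) + δ)) - (1 - 1/((N+m : ℕ):ℝ)) := by
    intro m
    have hn2 : (2:ℝ) ≤ ((N+m:ℕ):ℝ) := by
      have : (N:ℝ) ≤ ((N+m:ℕ):ℝ) := by exact_mod_cast Nat.le_add_right N m
      linarith
    have h1 : (0:ℝ) < ((N+m:ℕ):ℝ) := by linarith
    have h2 : (0:ℝ) < ((N+m:ℕ):ℝ) + δ := by linarith
    have : (1:ℝ)/(((N+m:ℕ):ℝ) + δ) ≤ 1/((N+m:ℕ):ℝ) := by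
      rw [div_le_div_iff₀ h2 h1]; linarith
    linarith
  have hsum : ∑ m ∈ Finset.range (K - N),
      ((1 - 1/(((N+m : ℕ):ℝ) + δ)) - (1 - 1/((N+m : ℕ):ℝ))) ≤ δ/((N:ℝ)-1) := by
    set f : ℕ → ℝ := fun m => δ/((N:ℝ)+m-1) with hf
    have hterm : ∀ m ∈ Finset.range (K - N),
        (1 - 1/(((N+m : ℕ):ℝ) + δ)) - (1 - 1/((N+m : ℕ):ℝ)) ≤ f m - f (m+1) := by
      intro m _
      have hcast : ((N+m:ℕ):ℝ) = (N:ℝ) + m := by push_cast; ring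
      have hm0 : (0:ℝ) ≤ (m:ℝ) := Nat.cast_nonneg m
      have hn2 : (2:ℝ) ≤ (N:ℝ) + m := by linarith
      have h1 : (0:ℝ) < (N:ℝ) + m - 1 := by linarith
      have h2 : (0:ℝ) < (N:ℝ) + m := by linarith
      have h3 : (0:ℝ) < (N:ℝ) + m + δ := by linarith
      have e1 : 1 - 1/(((N:ℝ)+m)+δ) - (1 - 1/((N:ℝ)+m)) = δ/(((N:ℝ)+m)*(((N:ℝ)+m)+δ)) := by
        field_simp
        ring
      have e2 : f m - f (m+1) = δ/(((N:ℝ)+m-1)*((N:ℝ)+m)) := by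
        rw [hf]
        have : (N:ℝ) + (m+1:ℕ) - 1 = (N:ℝ) + m := by push_cast; ring
        simp only [this]
        field_simp
        ring
      rw [hcast, e1, e2, div_le_div_iff₀ (by positivity) (by positivity)]
      nlinarith [mul_pos (mul_pos hδ0 h2) (by linarith : (0:ℝ) < δ + 1)]
    refine le_trans (Finset.sum_le_sum hterm) ?_
    rw [Finset.sum_range_sub' f (K - N)]
    have hfK : 0 ≤ f (K - N) := by
      rw [hf]
      have : (0:ℝ) ≤ ((K - N : ℕ):ℝ) := Nat.cast_nonneg _
      have h1 : (0:ℝ) < (N:ℝ) + ((K-N:ℕ):ℝ) - 1 := by linarith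
      exact le_of_lt (div_pos hδ0 h1)
    have hf0 : f 0 = δ/((N:ℝ)-1) := by rw [hf]; norm_num
    rw [hf0]
    linarith
  calc ENNReal.ofReal (1/(K:ℝ)) + ∑ m ∈ Finset.range (K - N),
        ENNReal.ofReal ((1 - 1/(((N+m : ℕ):ℝ) + δ)) - (1 - 1/((N+m : ℕ):ℝ)))
      = ENNReal.ofReal (1/(K:ℝ)) + ENNReal.ofReal (∑ m ∈ Finset.range (K - N),
          ((1 - 1/(((N+m : ℕ):ℝ) + δ)) - (1 - 1/((N+m : ℕ):ℝ)))) := by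
        rw [ENNReal.ofReal_sum_of_nonneg (fun m _ => hlen m)]
    _ ≤ ENNReal.ofReal (1/(K:ℝ)) + ENNReal.ofReal (δ/((N:ℝ)-1)) :=
        add_le_add le_rfl (ENNReal.ofReal_le_ofReal hsum)
    _ = ENNReal.ofReal (1/(K:ℝ) + δ/((N:ℝ)-1)) := by
        rw [← ENNReal.ofReal_add (by positivity) (le_of_lt (div_pos hδ0 (by linarith : (0:ℝ) < (N:ℝ)-1)))]

/-- The lower bound via finitely many disjoint branch intervals. -/
lemma vol_lower {N L : ℕ} (hN : 2 ≤ N) (hL : 1 ≤ L) {δ : ℝ} (hδ0 : 0 < δ) (hδ1 : δ ≤ 1)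
    {S : Set ℝ}
    (hsub : ∀ m ∈ Finset.range L,
      Set.Ioo (1 - 1/((N+m:ℕ):ℝ)) (1 - 1/(((N+m:ℕ):ℝ) + δ)) ⊆ S) :
    ENNReal.ofReal (1 / Real.log 2) *
      ENNReal.ofReal ((L:ℝ) * (δ / ((((N:ℝ)+L)) * (((N:ℝ)+L) + δ)))) ≤ muBCF S := by
  have hN2 : (2:ℝ) ≤ N := by exact_mod_cast hN
  set P : ℕ → Set ℝ := fun m => Set.Ioo (1 - 1/((N+m:ℕ):ℝ)) (1 - 1/(((N+m:ℕ):ℝ) + δ))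
    with hP
  have hcastm : ∀ m : ℕ, ((N+m:ℕ):ℝ) = (N:ℝ) + m := fun m => by push_cast; ring
  have hn2 : ∀ m : ℕ, (2:ℝ) ≤ ((N+m:ℕ):ℝ) := by
    intro m
    rw [hcastm]
    have : (0:ℝ) ≤ (m:ℝ) := Nat.cast_nonneg m
    linarith
  set U : Set ℝ := ⋃ m ∈ Finset.range L, P m with hU
  have hUS : U ⊆ S := by
    intro x hx
    simp only [hU, Set.mem_iUnion] at hx
    obtain ⟨m, hm, hxm⟩ := hx
    exact hsub m hm hxm
  have hPmeas : ∀ m : ℕ, MeasurableSet (P m) := fun m => measurableSet_Ioo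
  have hUmeas : MeasurableSet U :=
    (Finset.range L).measurableSet_biUnion (fun m _ => hPmeas m)
  have hUsub : U ⊆ Set.Icc (1/2:ℝ) 1 := by
    intro x hx
    simp only [hU, Set.mem_iUnion] at hx
    obtain ⟨m, _, hx1, hx2⟩ := hx
    have h1 : (1:ℝ)/((N+m:ℕ):ℝ) ≤ 1/2 := by
      rw [div_le_div_iff₀ (by linarith [hn2 m]) (by norm_num)]; linarith [hn2 m]
    have h2 : (0:ℝ) < 1/(((N+m:ℕ):ℝ) + δ) := by positivity
    exact ⟨by linarith, by linarith⟩
  have hkey : ∀ i j : ℕ, i < j → Disjoint (P i) (P j) := by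
    intro i j hij
    rw [Set.disjoint_left]
    rintro x ⟨hx1, hx2⟩ ⟨hy1, hy2⟩
    have hij' : (i:ℝ) + 1 ≤ j := by exact_mod_cast hij
    have c1 : ((N+i:ℕ):ℝ) + δ ≤ ((N+j:ℕ):ℝ) := by
      rw [hcastm, hcastm]; linarith
    have p1 : (0:ℝ) < ((N+i:ℕ):ℝ) + δ := by linarith [hn2 i]
    have : 1/((N+j:ℕ):ℝ) ≤ 1/(((N+i:ℕ):ℝ)+δ) := by
      rw [div_le_div_iff₀ (by linarith [hn2 j]) p1]; linarith
    linarith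
  have hdisj : (↑(Finset.range L) : Set ℕ).PairwiseDisjoint P := by
    intro i _ j _ hij
    rcases Nat.lt_or_ge i j with h | h
    · exact hkey i j h
    · exact (hkey j i (by omega)).symm
  have hvolU : volume U = ∑ m ∈ Finset.range L, volume (P m) :=
    measure_biUnion_finset hdisj (fun m _ => hPmeas m)
  have hlb : ∀ m ∈ Finset.range L,
      ENNReal.ofReal (δ / ((((N:ℝ)+L)) * (((N:ℝ)+L) + δ))) ≤ volume (P m) := by
    intro m hm
    rw [hP]
    simp only []
    rw [Real.volume_Ioo]
    refine ENNReal.ofReal_le_ofReal ?_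
    have hmL : (m:ℝ) ≤ (L:ℝ) := by exact_mod_cast le_of_lt (Finset.mem_range.mp hm)
    have hL2 : (0:ℝ) < (N:ℝ) + L := by
      have : (0:ℝ) ≤ (L:ℝ) := Nat.cast_nonneg L
      linarith
    have hn0 : (0:ℝ) < ((N+m:ℕ):ℝ) := by linarith [hn2 m]
    have hnδ : (0:ℝ) < ((N+m:ℕ):ℝ) + δ := by linarith
    have e1 : 1 - 1/(((N+m:ℕ):ℝ) + δ) - (1 - 1/((N+m:ℕ):ℝ))
        = δ / (((N+m:ℕ):ℝ) * (((N+m:ℕ):ℝ) + δ)) := by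
      field_simp
      ring
    rw [e1, div_le_div_iff₀ (by positivity) (by positivity)]
    have hle : ((N+m:ℕ):ℝ) ≤ (N:ℝ) + L := by rw [hcastm]; linarith
    have hprod : ((N+m:ℕ):ℝ) * (((N+m:ℕ):ℝ)+δ) ≤ ((N:ℝ)+L)*(((N:ℝ)+L)+δ) :=
      mul_le_mul hle (by linarith) (le_of_lt hnδ) (by linarith)
    exact mul_le_mul_of_nonneg_left hprod hδ0.le
  calc ENNReal.ofReal (1 / Real.log 2) *
        ENNReal.ofReal ((L:ℝ) * (δ / ((((N:ℝ)+L)) * (((N:ℝ)+L) + δ))))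
      ≤ ENNReal.ofReal (1 / Real.log 2) * volume U := by
        refine mul_le_mul_right ?_ _
        rw [hvolU]
        calc ENNReal.ofReal ((L:ℝ) * (δ / ((((N:ℝ)+L)) * (((N:ℝ)+L) + δ))))
            = ∑ m ∈ Finset.range L,
                ENNReal.ofReal (δ / ((((N:ℝ)+L)) * (((N:ℝ)+L) + δ))) := by
              rw [Finset.sum_const, Finset.card_range, nsmul_eq_mul,
                ← ENNReal.ofReal_natCast, ← ENNReal.ofReal_mul (Nat.cast_nonneg L)]
          _ ≤ ∑ m ∈ Finset.range L, volume (P m) := Finset.sum_le_sum hlb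
    _ ≤ muBCF U := vol_le_muBCF hUmeas hUsub
    _ ≤ muBCF S := measure_mono hUS

lemma toReal_bounds {m : ENNReal} {l u : ℝ} (hu0 : 0 ≤ u) (hl : ENNReal.ofReal l ≤ m)
    (hu : m ≤ ENNReal.ofReal u) : l ≤ m.toReal ∧ m.toReal ≤ u := by
  have hm : m ≠ ⊤ := ne_top_of_le_ne_top ENNReal.ofReal_ne_top hu
  constructor
  · exact (ENNReal.ofReal_le_iff_le_toReal hm).mp hl
  · exact ENNReal.toReal_le_of_le_ofReal hu0 hu

lemma bounds_G {N : ℕ} (hN : 2 ≤ N) :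
    1/(Real.log 2 * N) ≤ (muBCF {x : ℝ | x ∈ Set.Icc (0:ℝ) 1 ∧ (N : ℝ) < gBCF x}).toReal ∧
    (muBCF {x : ℝ | x ∈ Set.Icc (0:ℝ) 1 ∧ (N : ℝ) < gBCF x}).toReal ≤ 2/(Real.log 2 * N) := by
  have hN2 : (2:ℝ) ≤ N := by exact_mod_cast hN
  have hL := log2_pos
  rw [gset_eq hN]
  have hsub : Set.Ico (1 - 1/(N:ℝ)) 1 ⊆ Set.Icc (1/2:ℝ) 1 := by
    intro x hx
    have : (1:ℝ)/(N:ℝ) ≤ 1/2 := by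
      rw [div_le_div_iff₀ (by linarith) (by norm_num)]; linarith
    exact ⟨by linarith [hx.1], le_of_lt hx.2⟩
  have hvol : volume (Set.Ico (1 - 1/(N:ℝ)) 1) = ENNReal.ofReal (1/(N:ℝ)) := by
    rw [Real.volume_Ico]; congr 1; ring
  refine toReal_bounds (by positivity) ?_ ?_
  · refine le_trans (le_of_eq ?_) (vol_le_muBCF measurableSet_Ico hsub)
    rw [hvol, ← ENNReal.ofReal_mul (by positivity)]
    congr 1
    rw [div_mul_div_comm, one_mul]
  · refine le_trans (muBCF_le_vol measurableSet_Ico hsub) (le_of_eq ?_)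
    rw [hvol, ← ENNReal.ofReal_mul (by positivity)]
    congr 1
    rw [div_mul_div_comm, mul_one]

lemma bounds_P {M : ℕ} (hM : 2 ≤ M) :
    1/(24 * Real.log 2 * ((M:ℝ)+1)) ≤ (muBCF (superLevelSet Tbcf Ebcf M)).toReal ∧
    (muBCF (superLevelSet Tbcf Ebcf M)).toReal ≤ 4/(Real.log 2 * ((M:ℝ)+1)) := by
  have hM2 : (2:ℝ) ≤ M := by exact_mod_cast hM
  have hL := log2_pos
  refine toReal_bounds (by positivity) ?_ ?_
  · -- lower bound
    set δ : ℝ := 1/((M:ℝ)+2) with hδ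
    have hδ0 : (0:ℝ) < δ := by positivity
    have hδM : δ * ((M:ℝ)+2) = 1 := by rw [hδ]; field_simp
    have hδ1 : δ ≤ 1 := by nlinarith
    have hsub' : ∀ m ∈ Finset.range 1,
        Set.Ioo (1 - 1/(((2+m : ℕ)):ℝ)) (1 - 1/((((2+m : ℕ)):ℝ) + δ)) ⊆
          superLevelSet Tbcf Ebcf M := by
      intro m hm x hx
      obtain ⟨h1, h2, h3, _⟩ := piece_subset (n := 2+m) (by omega) hδ0 hδ1 hx
      refine mem_superLevel_of h1 h2 ?_
      calc ((M:ℝ)+2) * Tbcf x < ((M:ℝ)+2) * δ :=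
            mul_lt_mul_of_pos_left h3 (by linarith)
        _ = 1 := by rw [mul_comm]; exact hδM
    have hlow := vol_lower (N:=2) (L:=1) le_rfl le_rfl hδ0 hδ1 hsub'
    refine le_trans ?_ hlow
    rw [← ENNReal.ofReal_mul (by positivity)]
    refine ENNReal.ofReal_le_ofReal ?_
    push_cast
    have h3δ : (2:ℝ) + 1 + δ ≤ 4 := by nlinarith
    have hval : 1/(24*((M:ℝ)+1)) ≤ 1 * (δ / ((2+1) * (2+1+δ))) := by
      rw [one_mul, div_le_div_iff₀ (by positivity) (by positivity)]
      nlinarith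
    calc 1/(24 * Real.log 2 * ((M:ℝ)+1))
        = 1/Real.log 2 * (1/(24*((M:ℝ)+1))) := by
          rw [div_mul_div_comm, one_mul]; ring_nf
      _ ≤ 1/Real.log 2 * (1 * (δ / ((2+1) * (2+1+δ)))) := by
          refine mul_le_mul_of_nonneg_left hval (by positivity)
  · -- upper bound
    set δ : ℝ := 1/((M:ℝ)+1) with hδ
    have hδ0 : (0:ℝ) < δ := by positivity
    have hδM : δ * ((M:ℝ)+1) = 1 := by rw [hδ]; field_simp
    have hδ1 : δ ≤ 1 := by nlinarith
    have hsub' : ∀ x ∈ superLevelSet Tbcf Ebcf M,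
        1 - 1/((2:ℕ):ℝ) ≤ x ∧ x < 1 ∧ Tbcf x < δ := by
      intro x hx
      obtain ⟨hx1, hx2, hx3⟩ := superLevel_subset (by omega) hx
      refine ⟨by push_cast; linarith [hx1.1], hx1.2, ?_⟩
      rw [hδ, lt_div_iff₀ (by positivity)]
      linarith [hx3]
    have hup := vol_upper (N:=2) (K:=M+2) le_rfl (by omega) hδ0 hδ1 hsub'
    refine le_trans hup ?_
    rw [← ENNReal.ofReal_mul (by positivity)]
    refine ENNReal.ofReal_le_ofReal ?_
    push_cast
    have h1 : (1:ℝ)/((M:ℝ)+2) ≤ 1/((M:ℝ)+1) := by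
      rw [div_le_div_iff₀ (by positivity) (by positivity)]; linarith
    have h2 : δ/((2:ℝ)-1) = δ := by norm_num
    calc 2/Real.log 2 * (1/((M:ℝ)+2) + δ/((2:ℝ)-1))
        ≤ 2/Real.log 2 * (2/((M:ℝ)+1)) := by
          refine mul_le_mul_of_nonneg_left ?_ (by positivity)
          rw [h2, hδ]
          have : (2:ℝ)/((M:ℝ)+1) = 1/((M:ℝ)+1) + 1/((M:ℝ)+1) := by ring
          rw [this]
          linarith
      _ = 4/(Real.log 2 * ((M:ℝ)+1)) := by
          rw [div_mul_div_comm]; norm_num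

lemma bounds_I {M N : ℕ} (hM : 2 ≤ M) (hN : 2 ≤ N) :
    1/(12 * Real.log 2 * (N:ℝ) * ((M:ℝ)+1)) ≤
      (muBCF ({x : ℝ | x ∈ Set.Icc (0:ℝ) 1 ∧ (N : ℝ) < gBCF x} ∩
        superLevelSet Tbcf Ebcf M)).toReal ∧
    (muBCF ({x : ℝ | x ∈ Set.Icc (0:ℝ) 1 ∧ (N : ℝ) < gBCF x} ∩
        superLevelSet Tbcf Ebcf M)).toReal ≤ 6/(Real.log 2 * (N:ℝ) * ((M:ℝ)+1)) := by
  have hM2 : (2:ℝ) ≤ M := by exact_mod_cast hM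
  have hN2 : (2:ℝ) ≤ N := by exact_mod_cast hN
  have hL := log2_pos
  refine toReal_bounds (by positivity) ?_ ?_
  · -- lower bound
    set δ : ℝ := 1/((M:ℝ)+2) with hδ
    have hδ0 : (0:ℝ) < δ := by positivity
    have hδM : δ * ((M:ℝ)+2) = 1 := by rw [hδ]; field_simp
    have hδ1 : δ ≤ 1 := by nlinarith
    have hδ4 : δ ≤ 1/4 := by
      rw [hδ, div_le_div_iff₀ (by positivity) (by norm_num)]; linarith
    have hsub' : ∀ m ∈ Finset.range N,
        Set.Ioo (1 - 1/(((N+m : ℕ)):ℝ)) (1 - 1/((((N+m : ℕ)):ℝ) + δ)) ⊆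
          ({x : ℝ | x ∈ Set.Icc (0:ℝ) 1 ∧ (N : ℝ) < gBCF x} ∩
            superLevelSet Tbcf Ebcf M) := by
      intro m hm x hx
      obtain ⟨h1, h2, h3, h4⟩ := piece_subset (n := N+m) (by omega) hδ0 hδ1 hx
      constructor
      · rw [gset_eq hN]
        refine ⟨?_, h1.2⟩
        have hnm : (N:ℝ) ≤ ((N+m:ℕ):ℝ) := by exact_mod_cast Nat.le_add_right N m
        have : (1:ℝ)/((N+m:ℕ):ℝ) ≤ 1/(N:ℝ) := by
          rw [div_le_div_iff₀ (by linarith) (by linarith)]; linarith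
        linarith
      · refine mem_superLevel_of h1 h2 ?_
        calc ((M:ℝ)+2) * Tbcf x < ((M:ℝ)+2) * δ :=
              mul_lt_mul_of_pos_left h3 (by linarith)
          _ = 1 := by rw [mul_comm]; exact hδM
    have hlow := vol_lower (N:=N) (L:=N) hN (by omega) hδ0 hδ1 hsub'
    refine le_trans ?_ hlow
    rw [← ENNReal.ofReal_mul (by positivity)]
    refine ENNReal.ofReal_le_ofReal ?_
    have hval : 1/(12*(N:ℝ)*((M:ℝ)+1)) ≤ (N:ℝ) * (δ/(((N:ℝ)+N) * ((N:ℝ)+N+δ))) := by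
      rw [mul_div_assoc' (N:ℝ) δ _, div_le_div_iff₀ (by positivity) (by positivity)]
      have hMδ : ((M:ℝ)+1)*δ = 1 - δ := by nlinarith
      nlinarith [sq_nonneg ((N:ℝ)), mul_pos (mul_pos hδ0 (by linarith : (0:ℝ) < (N:ℝ))) (by linarith : (0:ℝ) < (N:ℝ))]
    calc 1/(12 * Real.log 2 * (N:ℝ) * ((M:ℝ)+1))
        = 1/Real.log 2 * (1/(12*(N:ℝ)*((M:ℝ)+1))) := by
          rw [div_mul_div_comm, one_mul]; ring_nf
      _ ≤ 1/Real.log 2 * ((N:ℝ) * (δ/(((N:ℝ)+N) * ((N:ℝ)+N+δ)))) :=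
          mul_le_mul_of_nonneg_left hval (by positivity)
  · -- upper bound
    set δ : ℝ := 1/((M:ℝ)+1) with hδ
    have hδ0 : (0:ℝ) < δ := by positivity
    have hδM : δ * ((M:ℝ)+1) = 1 := by rw [hδ]; field_simp
    have hδ1 : δ ≤ 1 := by nlinarith
    have hsub' : ∀ x ∈ ({x : ℝ | x ∈ Set.Icc (0:ℝ) 1 ∧ (N : ℝ) < gBCF x} ∩
        superLevelSet Tbcf Ebcf M),
        1 - 1/(N:ℝ) ≤ x ∧ x < 1 ∧ Tbcf x < δ := by
      intro x hx
      obtain ⟨hxG, hxP⟩ := hx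
      rw [gset_eq hN] at hxG
      obtain ⟨_, _, hx3⟩ := superLevel_subset (by omega) hxP
      refine ⟨hxG.1, hxG.2, ?_⟩
      rw [hδ, lt_div_iff₀ (by positivity)]
      linarith [hx3]
    have hup := vol_upper (N:=N) (K:=N*(M+1)) hN
      (Nat.le_mul_of_pos_right N (by omega)) hδ0 hδ1 hsub'
    refine le_trans hup ?_
    rw [← ENNReal.ofReal_mul (by positivity)]
    refine ENNReal.ofReal_le_ofReal ?_
    have hcast : ((N*(M+1) : ℕ):ℝ) = (N:ℝ)*((M:ℝ)+1) := by push_cast; ring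
    rw [hcast]
    have hval : 1/((N:ℝ)*((M:ℝ)+1)) + δ/((N:ℝ)-1) ≤ 3/((N:ℝ)*((M:ℝ)+1)) := by
      have h1 : δ/((N:ℝ)-1) ≤ 2/((N:ℝ)*((M:ℝ)+1)) := by
        rw [hδ, div_div, div_le_div_iff₀ (by nlinarith) (by positivity)]
        nlinarith [mul_nonneg (by linarith : (0:ℝ) ≤ (M:ℝ)+1) (by linarith : (0:ℝ) ≤ (N:ℝ)-2)]
      have h2 : (3:ℝ)/((N:ℝ)*((M:ℝ)+1)) = 1/((N:ℝ)*((M:ℝ)+1)) + 2/((N:ℝ)*((M:ℝ)+1)) := by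
        ring
      rw [h2]
      exact add_le_add le_rfl h1
    calc 2/Real.log 2 * (1/((N:ℝ)*((M:ℝ)+1)) + δ/((N:ℝ)-1))
        ≤ 2/Real.log 2 * (3/((N:ℝ)*((M:ℝ)+1))) :=
          mul_le_mul_of_nonneg_left hval (by positivity)
      _ = 6/(Real.log 2 * ((N:ℝ)*((M:ℝ)+1))) := by
          rw [div_mul_div_comm]; norm_num
      _ = 6/(Real.log 2 * (N:ℝ) * ((M:ℝ)+1)) := by ring_nf

theorem bcf_asymp_indep' :
    ∃ C : ℝ, 0 < C ∧ ∃ N₀ : ℕ, ∀ M N : ℕ, N₀ ≤ M → N₀ ≤ N →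
      C⁻¹ * (muBCF ({x | x ∈ Set.Icc (0:ℝ) 1 ∧ (N : ℝ) < gBCF x} ∩
          superLevelSet Tbcf Ebcf M)).toReal ≤
        (muBCF {x | x ∈ Set.Icc (0:ℝ) 1 ∧ (N : ℝ) < gBCF x}).toReal *
          (muBCF (superLevelSet Tbcf Ebcf M)).toReal ∧
      (muBCF {x | x ∈ Set.Icc (0:ℝ) 1 ∧ (N : ℝ) < gBCF x}).toReal *
          (muBCF (superLevelSet Tbcf Ebcf M)).toReal ≤
        C * (muBCF ({x | x ∈ Set.Icc (0:ℝ) 1 ∧ (N : ℝ) < gBCF x} ∩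
          superLevelSet Tbcf Ebcf M)).toReal := by
  have hL := log2_pos
  refine ⟨1728 / Real.log 2, by positivity, 2, fun M N hM hN => ?_⟩
  have hLle : Real.log 2 ≤ 1 := by
    have := Real.log_two_lt_d9
    linarith
  have hM2 : (2:ℝ) ≤ M := by exact_mod_cast hM
  have hN2 : (2:ℝ) ≤ N := by exact_mod_cast hN
  have hn0 : (0:ℝ) < (N:ℝ) := by linarith
  have hm1 : (0:ℝ) < (M:ℝ) + 1 := by linarith
  obtain ⟨ha1, ha2⟩ := bounds_G hN
  obtain ⟨hb1, hb2⟩ := bounds_P hM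
  obtain ⟨hc1, hc2⟩ := bounds_I hM hN
  set a := (muBCF {x : ℝ | x ∈ Set.Icc (0:ℝ) 1 ∧ (N : ℝ) < gBCF x}).toReal with ha
  set b := (muBCF (superLevelSet Tbcf Ebcf M)).toReal with hb
  set c := (muBCF ({x : ℝ | x ∈ Set.Icc (0:ℝ) 1 ∧ (N : ℝ) < gBCF x} ∩
      superLevelSet Tbcf Ebcf M)).toReal with hc
  set L := Real.log 2 with hLdef
  set n := (N:ℝ) with hndef
  set m := (M:ℝ) with hmdef
  have hL0 : L ≠ 0 := ne_of_gt hL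
  have hn0' : n ≠ 0 := ne_of_gt hn0
  have hm1' : m + 1 ≠ 0 := ne_of_gt hm1
  have ha0 : 0 ≤ a := le_trans (by positivity) ha1
  have hb0 : 0 ≤ b := le_trans (by positivity) hb1
  have hc0 : 0 ≤ c := le_trans (by positivity) hc1
  constructor
  · -- C⁻¹ * c ≤ a * b
    rw [inv_div]
    calc L/1728 * c ≤ L/1728 * (6/(L*n*(m+1))) :=
          mul_le_mul_of_nonneg_left hc2 (by positivity)
      _ = 6*L/(1728*(L*n*(m+1))) := by field_simp
      _ ≤ 1/(L*n*(24*(L*(m+1)))) := by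
          rw [div_le_div_iff₀ (by positivity) (by positivity)]
          have hY : (0:ℝ) < L*n*(m+1) := by positivity
          nlinarith [mul_nonneg (by nlinarith : (0:ℝ) ≤ 1 - L*L) hY.le]
      _ = 1/(L*n) * (1/(24*L*(m+1))) := by field_simp
      _ ≤ a * b := mul_le_mul ha1 hb1 (by positivity) ha0
  · -- a * b ≤ C * c
    calc a * b ≤ 2/(L*n) * (4/(L*(m+1))) :=
          mul_le_mul ha2 hb2 hb0 (by positivity)
      _ = 8/(L*L*n*(m+1)) := by field_simp; ring
      _ ≤ 144/(L*L*n*(m+1)) := by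
          have hX : (0:ℝ) < L*L*n*(m+1) := by positivity
          exact div_le_div_of_nonneg_right (by norm_num) hX.le
      _ = 1728/L * (1/(12*L*n*(m+1))) := by field_simp; ring
      _ ≤ 1728/L * c := mul_le_mul_of_nonneg_left hc1 (by positivity)


/-- Lemma 5.2 (lem:aux1): asymptotic independence of `{g > N}` and `{φ_E > M}`
for the backward continued fraction map. -/
theorem bcf_asymp_indep :
    ∃ C : ℝ, 0 < C ∧ ∃ N₀ : ℕ, ∀ M N : ℕ, N₀ ≤ M → N₀ ≤ N →
      C⁻¹ * (muBCF ({x | x ∈ Set.Icc (0:ℝ) 1 ∧ (N : ℝ) < gBCF x} ∩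
          superLevelSet Tbcf Ebcf M)).toReal ≤
        (muBCF {x | x ∈ Set.Icc (0:ℝ) 1 ∧ (N : ℝ) < gBCF x}).toReal *
          (muBCF (superLevelSet Tbcf Ebcf M)).toReal ∧
      (muBCF {x | x ∈ Set.Icc (0:ℝ) 1 ∧ (N : ℝ) < gBCF x}).toReal *
          (muBCF (superLevelSet Tbcf Ebcf M)).toReal ≤
        C * (muBCF ({x | x ∈ Set.Icc (0:ℝ) 1 ∧ (N : ℝ) < gBCF x} ∩
          superLevelSet Tbcf Ebcf M)).toReal :=
  bcf_asymp_indep'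

end InfErg

end
end

section
/- Let T_ECF be the Even-Integer Continued Fraction map on [0,1], E = [0, 1/2], φ_E the first return time of T_ECF to E, μ the T_ECF-invariant measure with density 1/((1−x²) log√3), and let γ be either g(x) = 2⌊1/(2x) + 1/2⌋ or g̃(x) = ⌊1/x⌋. Then for M, N ∈ ℕ, μ( {γ > N} ∩ {φ_E > M} ) ≍ μ(γ > N)·μ(φ_E > M), i.e. there exist C > 0 and N_0 such that C^{−1}·μ({γ > N} ∩ {φ_E > M}) ≤ μ(γ > N)·μ(φ_E > M) ≤ C·μ({γ > N} ∩ {φ_E > M}) for all M, N ≥ N_0. -/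
open MeasureTheory Filter Set Asymptotics

noncomputable section

namespace InfErg

variable {X : Type*} [MeasurableSpace X]

/-! ### Auxiliary development for Lemma 5.4 -/

section Aux

lemma logs3_pos : 0 < Real.log (Real.sqrt 3) := by
  apply Real.log_pos
  rw [show (1:ℝ) = Real.sqrt 1 by simp]
  exact Real.sqrt_lt_sqrt (by norm_num) (by norm_num)

/-- The branch union in the definition of `Tecf`. -/
def Uecf : Set ℝ := ⋃ k : ℕ, Set.Ioo (1 / (2 * (k : ℝ) + 2)) (1 / (2 * (k : ℝ) + 1))

lemma tecf_of_mem {x : ℝ} (hx : x ∈ Uecf) : Tecf x = 1 - Int.fract (1/x) := by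
  rw [Tecf]; exact if_pos hx

lemma tecf_of_not_mem {x : ℝ} (hx : x ∉ Uecf) : Tecf x = Int.fract (1/x) := by
  rw [Tecf]; exact if_neg hx

lemma tecf_flip (k : ℕ) {x : ℝ} (h1 : 1/(2*(k:ℝ)+2) < x) (h2 : x < 1/(2*(k:ℝ)+1)) :
    Tecf x = 2*(k:ℝ)+2 - 1/x := by
  have hk1 : (0:ℝ) < 2*(k:ℝ)+1 := by positivity
  have hk2 : (0:ℝ) < 2*(k:ℝ)+2 := by positivity
  have hx0 : 0 < x := lt_trans (by positivity) h1
  have hu1 : 2*(k:ℝ)+1 < 1/x := by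
    rw [lt_div_iff₀ hx0]
    have := (lt_div_iff₀ hk1).1 h2
    linarith
  have hu2 : 1/x < 2*(k:ℝ)+2 := by
    rw [div_lt_iff₀ hx0]
    have := (div_lt_iff₀ hk2).1 h1
    linarith
  have hfl : ⌊1/x⌋ = 2*(k:ℤ)+1 := by
    rw [Int.floor_eq_iff]
    push_cast
    constructor <;> linarith
  have hmem : x ∈ Uecf := Set.mem_iUnion.2 ⟨k, h1, h2⟩
  rw [tecf_of_mem hmem, Int.fract, hfl]
  push_cast
  ring

lemma tecf_fract (k : ℕ) (hk : 1 ≤ k) {x : ℝ} (h1 : 1/(2*(k:ℝ)+1) < x) (h2 : x < 1/(2*(k:ℝ))) :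
    Tecf x = 1/x - 2*(k:ℝ) := by
  have hk0 : (0:ℝ) < 2*(k:ℝ) := by positivity
  have hk1 : (0:ℝ) < 2*(k:ℝ)+1 := by positivity
  have hx0 : 0 < x := lt_trans (by positivity) h1
  have hu1 : 2*(k:ℝ) < 1/x := by
    rw [lt_div_iff₀ hx0]
    have := (lt_div_iff₀ hk0).1 h2
    linarith
  have hu2 : 1/x < 2*(k:ℝ)+1 := by
    rw [div_lt_iff₀ hx0]
    have := (div_lt_iff₀ hk1).1 h1
    linarith
  have hnmem : x ∉ Uecf := by
    intro hmem
    obtain ⟨j, hj1, hj2⟩ : ∃ j : ℕ, 1/(2*(j:ℝ)+2) < x ∧ x < 1/(2*(j:ℝ)+1) := by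
      simpa [Uecf] using hmem
    have hj1' : (0:ℝ) < 2*(j:ℝ)+1 := by positivity
    have hj2' : (0:ℝ) < 2*(j:ℝ)+2 := by positivity
    have hv1 : 2*(j:ℝ)+1 < 1/x := by
      rw [lt_div_iff₀ hx0]
      have := (lt_div_iff₀ hj1').1 hj2
      linarith
    have hv2 : 1/x < 2*(j:ℝ)+2 := by
      rw [div_lt_iff₀ hx0]
      have := (div_lt_iff₀ hj2').1 hj1
      linarith
    have hjk : (j:ℝ) < (k:ℝ) := by linarith
    have hkj : (k:ℝ) < (j:ℝ)+1 := by linarith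
    have h1 : j < k := by exact_mod_cast hjk
    have h2 : k < j+1 := by exact_mod_cast hkj
    omega
  have hfl : ⌊1/x⌋ = 2*(k:ℤ) := by
    rw [Int.floor_eq_iff]
    push_cast
    constructor <;> linarith
  rw [tecf_of_not_mem hnmem, Int.fract, hfl]
  push_cast
  ring

lemma tecf_mem_Icc (x : ℝ) : Tecf x ∈ Set.Icc (0:ℝ) 1 := by
  rw [Tecf]
  split
  · constructor
    · have := Int.fract_lt_one (1/x); linarith
    · have := Int.fract_nonneg (1/x); linarith
  · exact ⟨Int.fract_nonneg _, (Int.fract_lt_one _).le⟩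

lemma tecf_one : Tecf 1 = 0 := by
  have h1 : (1:ℝ) ∉ Uecf := by
    intro hmem
    obtain ⟨j, _, hj2⟩ : ∃ j : ℕ, 1/(2*(j:ℝ)+2) < 1 ∧ (1:ℝ) < 1/(2*(j:ℝ)+1) := by
      simpa [Uecf] using hmem
    have hj1' : (0:ℝ) < 2*(j:ℝ)+1 := by positivity
    rw [lt_div_iff₀ hj1'] at hj2
    have : (0:ℝ) ≤ (j:ℝ) := Nat.cast_nonneg j
    linarith
  rw [tecf_of_not_mem h1]
  norm_num

lemma tecf_zero : Tecf 0 = 0 := by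
  have h1 : (0:ℝ) ∉ Uecf := by
    intro hmem
    obtain ⟨j, hj1, _⟩ : ∃ j : ℕ, 1/(2*(j:ℝ)+2) < 0 ∧ (0:ℝ) < 1/(2*(j:ℝ)+1) := by
      simpa [Uecf] using hmem
    have : (0:ℝ) < 1/(2*(j:ℝ)+2) := by positivity
    linarith
  rw [tecf_of_not_mem h1]
  norm_num

/-- `cc M = M/(M+1)`, the excursion thresholds. -/
def cc (M : ℕ) : ℝ := (M:ℝ) / ((M:ℝ)+1)

lemma cc_nonneg (M : ℕ) : 0 ≤ cc M := by
  rw [cc]; positivity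

lemma cc_lt_one (M : ℕ) : cc M < 1 := by
  rw [cc, div_lt_one (by positivity)]; linarith

lemma cc_half {M : ℕ} (hM : 1 ≤ M) : 1/2 ≤ cc M := by
  have h : (1:ℝ) ≤ (M:ℝ) := by exact_mod_cast hM
  rw [cc, le_div_iff₀ (by positivity)]
  linarith

lemma tecf_halfone {y : ℝ} (h1 : 1/2 < y) (h2 : y < 1) : Tecf y = 2 - 1/y := by
  have := tecf_flip 0 (x := y) (by norm_num [h1]) (by norm_num [h2])
  simpa using this

lemma cc_step {i : ℕ} {y : ℝ} (hy : y ∈ Set.Ioo (cc (i+1)) 1) : Tecf y ∈ Set.Ioo (cc i) 1 := by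
  have h12 : 1/2 ≤ cc (i+1) := cc_half (by omega)
  have hy1 : 1/2 < y := lt_of_le_of_lt h12 hy.1
  have hy0 : 0 < y := by linarith
  have hT : Tecf y = 2 - 1/y := tecf_halfone hy1 hy.2
  have hiy : (1:ℝ) < 1/y := by rw [lt_div_iff₀ hy0]; linarith [hy.2]
  constructor
  · rw [hT, cc, div_lt_iff₀ (by positivity)]
    have hkey : (i:ℝ)+1 < ((i:ℝ)+2) * y := by
      have h := hy.1
      rw [cc, div_lt_iff₀ (by positivity)] at h
      push_cast at h
      nlinarith
    have hdy : ((i:ℝ)+1)/y < (i:ℝ)+2 := by rw [div_lt_iff₀ hy0]; exact hkey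
    have e : (2 - 1/y) * ((i:ℝ)+1) = 2*((i:ℝ)+1) - ((i:ℝ)+1)/y := by ring
    rw [e]
    linarith
  · rw [hT]; linarith

lemma cc_iter {M : ℕ} {y : ℝ} (hy : y ∈ Set.Ioo (cc M) 1) :
    ∀ j, j ≤ M → Tecf^[j] y ∈ Set.Ioo (cc (M-j)) 1 := by
  intro j
  induction j with
  | zero => intro _; simpa using hy
  | succ n ih =>
    intro h
    have h1 := ih (by omega)
    rw [Function.iterate_succ_apply']
    have he : M - n = (M - (n+1)) + 1 := by omega
    rw [he] at h1
    exact cc_step h1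

lemma avoid_of_Ioo {M : ℕ} {x : ℝ} (hT : Tecf x ∈ Set.Ioo (cc M) 1) :
    ∀ k, 1 ≤ k → k ≤ M → Tecf^[k] x ∉ Eecf := by
  intro k hk1 hkM
  obtain ⟨j, rfl⟩ : ∃ j, k = j+1 := ⟨k-1, by omega⟩
  have hmem := cc_iter hT j (by omega)
  rw [Function.iterate_succ_apply]
  intro hE
  have h12 : 1/2 ≤ cc (M-j) := cc_half (by omega)
  rw [Eecf, Set.mem_Icc] at hE
  linarith [hmem.1, hE.2]

lemma returns_aux : ∀ i : ℕ, ∀ y : ℝ, 0 < y → y < 1 → y ≤ cc i → ∃ j, Tecf^[j] y ∈ Eecf := by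
  intro i
  induction i with
  | zero =>
    intro y h0 _ hc
    rw [cc] at hc
    norm_num at hc
    linarith
  | succ i ih =>
    intro y h0 h1 hc
    by_cases hy : y ≤ 1/2
    · refine ⟨0, ?_⟩
      simp only [Function.iterate_zero_apply]
      rw [Eecf, Set.mem_Icc]
      exact ⟨h0.le, hy⟩
    · push_neg at hy
      have hT : Tecf y = 2 - 1/y := tecf_halfone hy h1
      have hiy : (1:ℝ) < 1/y := by rw [lt_div_iff₀ h0]; linarith
      have hiy2 : 1/y < 2 := by rw [div_lt_iff₀ h0]; linarith
      have hT0 : 0 < Tecf y := by rw [hT]; linarith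
      have hT1 : Tecf y < 1 := by rw [hT]; linarith
      have hTc : Tecf y ≤ cc i := by
        rw [hT, cc]
        have hc' : y * ((i:ℝ)+2) ≤ (i:ℝ)+1 := by
          rw [cc, le_div_iff₀ (by positivity)] at hc
          push_cast at hc
          linarith
        rw [le_div_iff₀ (by positivity)]
        have hdy : (i:ℝ)+2 ≤ ((i:ℝ)+1)/y := by
          rw [le_div_iff₀ h0]; linarith
        have e : (2 - 1/y) * ((i:ℝ)+1) = 2*((i:ℝ)+1) - ((i:ℝ)+1)/y := by ring
        rw [e]
        linarith
      obtain ⟨j, hj⟩ := ih (Tecf y) hT0 hT1 hTc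
      exact ⟨j+1, by rwa [Function.iterate_succ_apply]⟩

lemma returns {y : ℝ} (h0 : 0 < y) (h1 : y < 1) : ∃ j, Tecf^[j] y ∈ Eecf := by
  obtain ⟨i, hi⟩ : ∃ i : ℕ, y ≤ cc i := by
    have h1y : 0 < 1 - y := by linarith
    obtain ⟨i, hi⟩ := exists_nat_ge (1/(1-y))
    refine ⟨i, ?_⟩
    rw [cc, le_div_iff₀ (by positivity)]
    rw [div_le_iff₀ h1y] at hi
    nlinarith
  exact returns_aux i y h0 h1 hi

lemma gt_cc_of_avoid : ∀ i : ℕ, ∀ y : ℝ, 1/2 < y → y < 1 →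
    (∀ j, j ≤ i → Tecf^[j] y ∉ Eecf) → cc (i+1) < y := by
  intro i
  induction i with
  | zero =>
    intro y h1 _ _
    have : cc 1 = 1/2 := by rw [cc]; norm_num
    rw [this]; exact h1
  | succ i ih =>
    intro y h1 h2 hav
    have hy0 : 0 < y := by linarith
    have hT : Tecf y = 2 - 1/y := tecf_halfone h1 h2
    have hiy : (1:ℝ) < 1/y := by rw [lt_div_iff₀ hy0]; linarith
    have hT1 : Tecf y < 1 := by rw [hT]; linarith
    have hTnotE : Tecf y ∉ Eecf := by
      have := hav 1 (by omega)
      rwa [Function.iterate_one] at this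
    have hTge : 0 ≤ Tecf y := (tecf_mem_Icc y).1
    have hT2 : 1/2 < Tecf y := by
      by_contra hcon
      push_neg at hcon
      exact hTnotE (by rw [Eecf, Set.mem_Icc]; exact ⟨hTge, hcon⟩)
    have hcc := ih (Tecf y) hT2 hT1 (fun j hj => by
      have := hav (j+1) (by omega)
      rwa [Function.iterate_succ_apply] at this)
    rw [hT, cc, div_lt_iff₀ (by positivity)] at hcc
    rw [cc, div_lt_iff₀ (by positivity)]
    push_cast at hcc ⊢
    have key : (1/y)*((i:ℝ)+2) < (i:ℝ)+3 := by nlinarith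
    have hmul := mul_lt_mul_of_pos_right key hy0
    have e : (1/y)*((i:ℝ)+2)*y = (i:ℝ)+2 := by field_simp
    rw [e] at hmul
    linarith

lemma returnTime_gt {M : ℕ} {x : ℝ} (hx : x ∈ Eecf) (hT : Tecf x ∈ Set.Ioo (cc M) 1) :
    M < returnTime Tecf Eecf x := by
  have hne : {k : ℕ | 1 ≤ k ∧ Tecf^[k] x ∈ Eecf}.Nonempty := by
    have h0 : 0 < Tecf x := lt_of_le_of_lt (cc_nonneg M) hT.1
    obtain ⟨j, hj⟩ := returns h0 hT.2
    exact ⟨j+1, by omega, by rwa [Function.iterate_succ_apply]⟩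
  have hmem := Nat.sInf_mem hne
  by_contra hcon
  push_neg at hcon
  exact avoid_of_Ioo hT _ hmem.1 hcon hmem.2

lemma avoid_of_returnTime_gt {M k : ℕ} {x : ℝ} (h : M < returnTime Tecf Eecf x)
    (hk1 : 1 ≤ k) (hkM : k ≤ M) : Tecf^[k] x ∉ Eecf := by
  intro hmem
  have : returnTime Tecf Eecf x ≤ k := Nat.sInf_le ⟨hk1, hmem⟩
  omega

lemma Tx_in_Ioo {M : ℕ} (hM : 2 ≤ M) {x : ℝ} (h : M < returnTime Tecf Eecf x) :
    Tecf x ∈ Set.Ioo (cc M) 1 := by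
  have h1 : Tecf x ∉ Eecf := by
    have := avoid_of_returnTime_gt h (k := 1) (by omega) (by omega)
    rwa [Function.iterate_one] at this
  have hb := tecf_mem_Icc x
  have hT2 : 1/2 < Tecf x := by
    by_contra hcon
    push_neg at hcon
    exact h1 (by rw [Eecf, Set.mem_Icc]; exact ⟨hb.1, hcon⟩)
  have hT1 : Tecf x < 1 := by
    rcases lt_or_eq_of_le hb.2 with he | he
    · exact he
    · exfalso
      have h2 : Tecf^[2] x ∈ Eecf := by
        rw [show (2:ℕ) = 1+1 from rfl, Function.iterate_succ_apply', Function.iterate_one, he,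
          tecf_one]
        simp [Eecf]
      exact avoid_of_returnTime_gt h (k := 2) (by omega) hM h2
  have hgt := gt_cc_of_avoid (M-1) (Tecf x) hT2 hT1 (fun j hj => by
    have := avoid_of_returnTime_gt h (k := j+1) (by omega) (by omega)
    rwa [Function.iterate_succ_apply] at this)
  rw [show M - 1 + 1 = M by omega] at hgt
  exact ⟨hgt, hT1⟩

lemma branch_cover {x t : ℝ} (hx0 : 0 < x) (hx : x ≤ 1/2) (ht : 1/2 ≤ t) (ht1 : t < 1)
    (hT : t < Tecf x) :
    ∃ k : ℕ, 1 ≤ k ∧ 1/(2*(k:ℝ)+2-t) < x ∧ x < 1/(2*(k:ℝ)+t) := by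
  have hu2 : (2:ℝ) ≤ 1/x := by
    rw [le_div_iff₀ hx0]; linarith
  have hxinv : 1/(1/x) = x := one_div_one_div x
  by_cases hmem : x ∈ Uecf
  · obtain ⟨k, hk1, hk2⟩ : ∃ k : ℕ, 1/(2*(k:ℝ)+2) < x ∧ x < 1/(2*(k:ℝ)+1) := by
      simpa [Uecf] using hmem
    match k, hk1, hk2 with
    | 0, hk1, hk2 =>
      exfalso
      norm_num at hk1
      linarith
    | (k+1), hk1, hk2 =>
      refine ⟨k+1, by omega, ?_, ?_⟩
      · have hfl := tecf_flip (k+1) hk1 hk2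
        rw [hfl] at hT
        have hpos : (0:ℝ) < 2*((k+1:ℕ):ℝ)+2-t := by push_cast; linarith
        rw [one_div_lt hpos hx0]
        linarith
      · have hpos : (0:ℝ) < 2*((k+1:ℕ):ℝ)+t := by push_cast; linarith
        have hpos2 : (0:ℝ) < 2*((k+1:ℕ):ℝ)+1 := by positivity
        calc x < 1/(2*((k+1:ℕ):ℝ)+1) := hk2
          _ ≤ 1/(2*((k+1:ℕ):ℝ)+t) := by
            exact one_div_le_one_div_of_le hpos (by linarith)
  · have hfr := tecf_of_not_mem hmem
    rw [hfr, Int.fract] at hT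
    have hu0 : (0:ℝ) < 1/x := by positivity
    have hn2 : (2:ℤ) ≤ ⌊1/x⌋ := by rwa [Int.le_floor, Int.cast_two]
    have hfr1 : t < 1/x - ⌊1/x⌋ := hT
    have hub : 1/x < ⌊1/x⌋ + 1 := Int.lt_floor_add_one (1/x)
    rcases Int.even_or_odd ⌊1/x⌋ with ⟨m, hm⟩ | ⟨m, hm⟩
    · -- ⌊1/x⌋ = 2m, m ≥ 1
      have hm1 : 1 ≤ m := by omega
      lift m to ℕ using (by omega : (0:ℤ) ≤ m) with k
      have hflr : (⌊1/x⌋ : ℝ) = 2*(k:ℝ) := by rw [hm]; push_cast; ring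
      have hk1 : (1:ℝ) ≤ (k:ℝ) := by exact_mod_cast hm1
      refine ⟨k, by exact_mod_cast hm1, ?_, ?_⟩
      · have hlt : 1/x < 2*(k:ℝ)+2-t := by linarith
        have hpos : (0:ℝ) < 2*(k:ℝ)+2-t := by linarith
        rw [one_div_lt hpos hx0]
        exact hlt
      · have hgt : 2*(k:ℝ)+t < 1/x := by linarith
        rw [lt_one_div hx0 (by positivity : (0:ℝ) < 2*(k:ℝ)+t)]
        exact hgt
    · -- ⌊1/x⌋ = 2m+1 : contradiction with x ∉ Uecf
      exfalso
      have hm1 : 1 ≤ m := by omega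
      lift m to ℕ using (by omega : (0:ℤ) ≤ m) with j
      have hflr : (⌊1/x⌋ : ℝ) = 2*(j:ℝ)+1 := by rw [hm]; push_cast; ring
      apply hmem
      refine Set.mem_iUnion.2 ⟨j, ?_, ?_⟩
      · have hlt : 1/x < 2*(j:ℝ)+2 := by linarith
        have hpos : (0:ℝ) < 2*(j:ℝ)+2 := by positivity
        rw [one_div_lt hpos hx0]
        exact hlt
      · have hgt : 2*(j:ℝ)+1 < 1/x := by linarith
        rw [lt_one_div hx0 (by positivity : (0:ℝ) < 2*(j:ℝ)+1)]
        exact hgt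

lemma mem_super {M k : ℕ} (hM : 1 ≤ M) (hk : 1 ≤ k) {x : ℝ}
    (h1 : 1/(2*(k:ℝ)+2 - cc M) < x) (h2 : x < 1/(2*(k:ℝ)+1)) :
    x ∈ superLevelSet Tecf Eecf M := by
  have hk1 : (1:ℝ) ≤ (k:ℝ) := by exact_mod_cast hk
  have hcc1 : 1/2 ≤ cc M := cc_half hM
  have hcc2 : cc M < 1 := cc_lt_one M
  have hpos : (0:ℝ) < 2*(k:ℝ)+2 - cc M := by linarith
  have hpos1 : (0:ℝ) < 2*(k:ℝ)+1 := by positivity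
  have hx0 : 0 < x := lt_trans (by positivity) h1
  have hxE : x ∈ Eecf := by
    refine Set.mem_Icc.2 ⟨hx0.le, ?_⟩
    have h3 : 1/(2*(k:ℝ)+1) ≤ 1/(2:ℝ) := one_div_le_one_div_of_le (by norm_num) (by linarith)
    linarith
  have hccM0 : 0 < cc M := lt_of_lt_of_le (by norm_num) hcc1
  have hflip : Tecf x = 2*(k:ℝ)+2 - 1/x := by
    apply tecf_flip k _ h2
    calc 1/(2*(k:ℝ)+2) < 1/(2*(k:ℝ)+2 - cc M) := by
          rw [one_div_lt_one_div (by positivity : (0:ℝ) < 2*(k:ℝ)+2) hpos]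
          linarith
      _ < x := h1
  have hTIoo : Tecf x ∈ Set.Ioo (cc M) 1 := by
    constructor
    · rw [hflip]
      have : 1/x < 2*(k:ℝ)+2 - cc M := by
        rw [one_div_lt hx0 hpos]
        exact h1
      linarith
    · rw [hflip]
      have : 2*(k:ℝ)+1 < 1/x := by
        rw [lt_one_div hpos1 hx0]
        exact h2
      linarith
  exact ⟨hxE, returnTime_gt hxE hTIoo⟩

lemma muECF_ge {S : Set ℝ} (hS : MeasurableSet S) (hsub : S ⊆ Set.Icc 0 (1/2)) :
    ENNReal.ofReal (1/Real.log (Real.sqrt 3)) * volume S ≤ muECF S := by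
  have hL := logs3_pos
  have e1 : muECF S = ∫⁻ x in S, ENNReal.ofReal (1/((1-x^2)*Real.log (Real.sqrt 3))) ∂volume := by
    rw [muECF, withDensity_apply _ hS, Measure.restrict_restrict hS,
      Set.inter_eq_self_of_subset_left (hsub.trans (Set.Icc_subset_Icc le_rfl (by norm_num)))]
  rw [e1, ← setLIntegral_const S (ENNReal.ofReal (1/Real.log (Real.sqrt 3)))]
  apply setLIntegral_mono' hS
  intro x hx
  apply ENNReal.ofReal_le_ofReal
  obtain ⟨hx0, hx2⟩ := hsub hx
  have h2 : x^2 ≤ 1/4 := by nlinarith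
  have hd0 : 0 < (1-x^2)*Real.log (Real.sqrt 3) := by nlinarith
  apply one_div_le_one_div_of_le hd0
  nlinarith

lemma muECF_le {S : Set ℝ} (hS : MeasurableSet S) (hsub : S ⊆ Set.Icc 0 (1/2)) :
    muECF S ≤ ENNReal.ofReal (4/(3*Real.log (Real.sqrt 3))) * volume S := by
  have hL := logs3_pos
  have e1 : muECF S = ∫⁻ x in S, ENNReal.ofReal (1/((1-x^2)*Real.log (Real.sqrt 3))) ∂volume := by
    rw [muECF, withDensity_apply _ hS, Measure.restrict_restrict hS,
      Set.inter_eq_self_of_subset_left (hsub.trans (Set.Icc_subset_Icc le_rfl (by norm_num)))]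
  rw [e1, ← setLIntegral_const S (ENNReal.ofReal (4/(3*Real.log (Real.sqrt 3))))]
  apply setLIntegral_mono' hS
  intro x hx
  apply ENNReal.ofReal_le_ofReal
  obtain ⟨hx0, hx2⟩ := hsub hx
  have h2 : x^2 ≤ 1/4 := by nlinarith
  have h3 : (3:ℝ)/4 ≤ 1 - x^2 := by nlinarith
  have hd0 : (0:ℝ) < (3/4)*Real.log (Real.sqrt 3) := by nlinarith
  have e2 : 4/(3*Real.log (Real.sqrt 3)) = 1/((3/4)*Real.log (Real.sqrt 3)) := by
    field_simp
  rw [e2]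
  apply one_div_le_one_div_of_le hd0
  nlinarith

lemma sum_range_invsq (m : ℕ) (hm : 1 ≤ m) (n : ℕ) :
    ∑ i ∈ Finset.range n, (1:ℝ)/(((m:ℝ)+(i:ℝ))^2) ≤ 2/(m:ℝ) := by
  have hm1 : (1:ℝ) ≤ (m:ℝ) := by exact_mod_cast hm
  have key : ∀ i ∈ Finset.range n,
      (1:ℝ)/(((m:ℝ)+(i:ℝ))^2) ≤ 2/((m:ℝ)+(i:ℝ)) - 2/((m:ℝ)+(i:ℝ)+1) := by
    intro i _
    have ha : (1:ℝ) ≤ (m:ℝ)+(i:ℝ) := by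
      have : (0:ℝ) ≤ (i:ℝ) := Nat.cast_nonneg i
      linarith
    have ha0 : (0:ℝ) < (m:ℝ)+(i:ℝ) := by linarith
    have ha1 : (0:ℝ) < (m:ℝ)+(i:ℝ)+1 := by linarith
    rw [div_sub_div _ _ ha0.ne' ha1.ne', div_le_div_iff₀ (by positivity) (by positivity)]
    nlinarith
  calc ∑ i ∈ Finset.range n, (1:ℝ)/(((m:ℝ)+(i:ℝ))^2)
      ≤ ∑ i ∈ Finset.range n, (2/((m:ℝ)+(i:ℝ)) - 2/((m:ℝ)+(i:ℝ)+1)) := Finset.sum_le_sum key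
    _ = 2/((m:ℝ)+(0:ℕ)) - 2/((m:ℝ)+(n:ℕ)) := by
        rw [← Finset.sum_range_sub' (fun i : ℕ => 2/((m:ℝ)+(i:ℝ))) n]
        apply Finset.sum_congr rfl
        intro i _
        push_cast
        ring
    _ ≤ 2/(m:ℝ) := by
        have h1 : (0:ℝ) ≤ 2/((m:ℝ)+(n:ℕ)) := by positivity
        simp only [Nat.cast_zero, add_zero]
        linarith

lemma tsum_invsq_tail (m : ℕ) (hm : 1 ≤ m) :
    ∑' i : ℕ, ENNReal.ofReal ((1:ℝ)/(((m:ℝ)+(i:ℝ))^2)) ≤ ENNReal.ofReal (2/(m:ℝ)) := by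
  rw [ENNReal.tsum_eq_iSup_sum]
  apply iSup_le
  intro A
  have hA : A ⊆ Finset.range (A.sup id + 1) := by
    intro i hi
    simp only [Finset.mem_range]
    exact Nat.lt_succ_of_le (Finset.le_sup (f := id) hi)
  calc ∑ i ∈ A, ENNReal.ofReal ((1:ℝ)/(((m:ℝ)+(i:ℝ))^2))
      = ENNReal.ofReal (∑ i ∈ A, (1:ℝ)/(((m:ℝ)+(i:ℝ))^2)) := by
        rw [ENNReal.ofReal_sum_of_nonneg]
        intro i _
        positivity
    _ ≤ ENNReal.ofReal (2/(m:ℝ)) := by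
        apply ENNReal.ofReal_le_ofReal
        refine le_trans (Finset.sum_le_sum_of_subset_of_nonneg hA ?_) (sum_range_invsq m hm _)
        intro i _ _
        positivity

lemma floor_half : ⌊(1:ℝ)/2⌋ = 0 := by
  rw [Int.floor_eq_zero_iff]
  constructor <;> norm_num

lemma gset_eq_gtECF (N : ℕ) :
    {x : ℝ | x ∈ Set.Icc (0:ℝ) 1 ∧ (N:ℝ) < gtECF x} = Set.Ioc 0 (1/((N+1:ℕ):ℝ)) := by
  have hb : (0:ℝ) < ((N+1:ℕ):ℝ) := by positivity
  ext x
  simp only [Set.mem_setOf_eq, Set.mem_Icc, Set.mem_Ioc, gtECF]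
  constructor
  · rintro ⟨⟨hx0, hx1⟩, hg⟩
    have hx0' : 0 < x := by
      rcases hx0.lt_or_eq with h | h
      · exact h
      · exfalso
        rw [← h] at hg
        norm_num at hg
        linarith [Nat.cast_nonneg (α := ℝ) N]
    have hfl : (N:ℤ)+1 ≤ ⌊1/x⌋ := by
      have h1 : ((N:ℤ):ℝ) < (⌊1/x⌋:ℝ) := by exact_mod_cast hg
      have h2 : (N:ℤ) < ⌊1/x⌋ := by exact_mod_cast h1
      omega
    have hle : (N:ℝ)+1 ≤ 1/x := by
      have := Int.le_floor.mp hfl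
      push_cast at this
      exact this
    refine ⟨hx0', ?_⟩
    rw [le_one_div hx0' hb]
    push_cast
    exact hle
  · rintro ⟨hx0, hxa⟩
    have hx1 : x ≤ 1 := le_trans hxa (by
      rw [div_le_one hb]
      exact_mod_cast Nat.le_add_left 1 N)
    have hle : ((N+1:ℕ):ℝ) ≤ 1/x := (le_one_div hx0 hb).mp hxa
    have hfl : (N:ℤ)+1 ≤ ⌊1/x⌋ := by
      rw [Int.le_floor]
      push_cast
      push_cast at hle
      exact hle
    have hfl' : (N:ℝ)+1 ≤ (⌊1/x⌋:ℝ) := by exact_mod_cast hfl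
    exact ⟨⟨hx0.le, hx1⟩, by linarith⟩

lemma gset_eq_gECF (N : ℕ) :
    {x : ℝ | x ∈ Set.Icc (0:ℝ) 1 ∧ (N:ℝ) < gECF x} = Set.Ioc 0 (1/((2*(N/2)+1:ℕ):ℝ)) := by
  obtain ⟨n, hn⟩ : ∃ n, N/2 = n := ⟨N/2, rfl⟩
  have hn1 : N < 2*n+2 := by omega
  have hn2 : 2*n ≤ N := by omega
  rw [hn]
  have ha0 : (0:ℝ) < ((2*n+1:ℕ):ℝ) := by positivity
  ext x
  simp only [Set.mem_setOf_eq, Set.mem_Icc, Set.mem_Ioc, gECF]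
  constructor
  · rintro ⟨⟨hx0, hx1⟩, hg⟩
    have hx0' : 0 < x := by
      rcases hx0.lt_or_eq with h | h
      · exact h
      · exfalso
        rw [← h] at hg
        have e0 : (1:ℝ)/(2*0) + 1/2 = 1/2 := by norm_num
        rw [e0, floor_half] at hg
        norm_num at hg
        linarith [Nat.cast_nonneg (α := ℝ) N]
    have hNF : (N:ℤ) < 2*⌊1/(2*x)+1/2⌋ := by exact_mod_cast hg
    have haF : ((n:ℤ)+1) ≤ ⌊1/(2*x)+1/2⌋ := by omega
    have hFle : (⌊1/(2*x)+1/2⌋:ℝ) ≤ 1/(2*x)+1/2 := Int.floor_le _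
    have haF' : (n:ℝ)+1 ≤ (⌊1/(2*x)+1/2⌋:ℝ) := by exact_mod_cast haF
    have h2 : ((2*n+1:ℕ):ℝ) ≤ 1/x := by
      have e : (1:ℝ)/(2*x) = (1/x)/2 := by ring
      rw [e] at hFle haF'
      push_cast
      linarith
    refine ⟨hx0', ?_⟩
    rw [le_one_div hx0' ha0]
    exact h2
  · rintro ⟨hx0, hxa⟩
    have hx1 : x ≤ 1 := le_trans hxa (by
      rw [div_le_one ha0]
      exact_mod_cast Nat.le_add_left 1 _)
    have hle : ((2*n+1:ℕ):ℝ) ≤ 1/x := (le_one_div hx0 ha0).mp hxa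
    have hfl : (n:ℤ) + 1 ≤ ⌊1/(2*x)+1/2⌋ := by
      rw [Int.le_floor]
      have e : (1:ℝ)/(2*x) = (1/x)/2 := by ring
      rw [e]
      push_cast at hle ⊢
      linarith
    have hfl' : (n:ℝ) + 1 ≤ (⌊1/(2*x)+1/2⌋:ℝ) := by exact_mod_cast hfl
    have hN : (N:ℝ) < 2*((n:ℝ)+1) := by exact_mod_cast hn1
    exact ⟨⟨hx0.le, hx1⟩, by linarith⟩

lemma h1t_eq (M : ℕ) : 1 - cc M = 1/((M:ℝ)+1) := by
  rw [cc]; field_simp; ring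

lemma super_zero_lt {M : ℕ} (hM : 2 ≤ M) {x : ℝ} (hx : x ∈ superLevelSet Tecf Eecf M) :
    0 < x := by
  obtain ⟨hxE, hrt⟩ := hx
  rw [Eecf, Set.mem_Icc] at hxE
  rcases hxE.1.lt_or_eq with h | h
  · exact h
  · exfalso
    have h1 : Tecf^[1] x ∈ Eecf := by
      rw [Function.iterate_one, ← h, tecf_zero, Eecf, Set.mem_Icc]
      norm_num
    have : returnTime Tecf Eecf x ≤ 1 := Nat.sInf_le ⟨le_rfl, h1⟩
    omega

lemma super_subset_cover {M : ℕ} (hM : 2 ≤ M) :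
    superLevelSet Tecf Eecf M ⊆
      ⋃ i : ℕ, Set.Ioo (1/(2*((1+i:ℕ):ℝ)+2 - cc M)) (1/(2*((1+i:ℕ):ℝ)+cc M)) := by
  intro x hx
  have hx0 : 0 < x := super_zero_lt hM hx
  obtain ⟨hxE, hrt⟩ := hx
  have hx2 : x ≤ 1/2 := by rw [Eecf, Set.mem_Icc] at hxE; exact hxE.2
  have hT := Tx_in_Ioo hM hrt
  obtain ⟨k, hk1, h1, h2⟩ := branch_cover hx0 hx2 (cc_half (by omega)) (cc_lt_one M) hT.1
  obtain ⟨i, rfl⟩ : ∃ i, k = 1+i := ⟨k-1, by omega⟩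
  exact Set.mem_iUnion.2 ⟨i, h1, h2⟩

lemma inter_subset_cover {M N a : ℕ} (hM : 2 ≤ M) (hN : 2 ≤ N) (ha1 : N ≤ a) :
    Set.Ioc 0 (1/(a:ℝ)) ∩ superLevelSet Tecf Eecf M ⊆
      ⋃ i : ℕ, Set.Ioo (1/(2*((N/2+i:ℕ):ℝ)+2 - cc M)) (1/(2*((N/2+i:ℕ):ℝ)+cc M)) := by
  rintro x ⟨hxG, hxS⟩
  have hx0 : 0 < x := super_zero_lt hM hxS
  obtain ⟨hxE, hrt⟩ := hxS
  have hx2 : x ≤ 1/2 := by rw [Eecf, Set.mem_Icc] at hxE; exact hxE.2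
  have hT := Tx_in_Ioo hM hrt
  obtain ⟨k, hk1, h1, h2⟩ := branch_cover hx0 hx2 (cc_half (by omega)) (cc_lt_one M) hT.1
  have ha0 : (0:ℝ) < (a:ℝ) := by
    have : 1 ≤ a := by omega
    exact_mod_cast this
  have hBpos : (0:ℝ) < 2*(k:ℝ)+2-cc M := by
    have : (1:ℝ) ≤ (k:ℝ) := by exact_mod_cast hk1
    linarith [cc_lt_one M]
  have hlt : 1/(2*(k:ℝ)+2-cc M) < 1/(a:ℝ) := lt_of_lt_of_le h1 hxG.2
  rw [one_div_lt_one_div hBpos ha0] at hlt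
  have hak : a < 2*k+2 := by
    have h3 : (a:ℝ) < ((2*k+2:ℕ):ℝ) := by
      push_cast
      linarith [cc_nonneg M]
    exact_mod_cast h3
  obtain ⟨i, rfl⟩ : ∃ i, k = N/2 + i := ⟨k - N/2, by omega⟩
  exact Set.mem_iUnion.2 ⟨i, h1, h2⟩

lemma cover_subset_E {M m : ℕ} (hM : 1 ≤ M) (hm : 1 ≤ m) :
    (⋃ i : ℕ, Set.Ioo (1/(2*((m+i:ℕ):ℝ)+2 - cc M)) (1/(2*((m+i:ℕ):ℝ)+cc M)))
      ⊆ Set.Icc 0 (1/2) := by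
  intro x hx
  obtain ⟨i, hxi⟩ := Set.mem_iUnion.1 hx
  have hK : (1:ℝ) ≤ ((m+i:ℕ):ℝ) := by exact_mod_cast (by omega : 1 ≤ m+i)
  have ht1 := cc_half hM
  have ht2 := cc_lt_one M
  have hdpos : (0:ℝ) < 2*((m+i:ℕ):ℝ)+2-cc M := by linarith
  have hl : 0 < 1/(2*((m+i:ℕ):ℝ)+2-cc M) := one_div_pos.2 hdpos
  constructor
  · linarith [hxi.1]
  · have h12 : 1/(2*((m+i:ℕ):ℝ)+cc M) ≤ 1/2 :=
      one_div_le_one_div_of_le (by norm_num) (by linarith)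
    linarith [hxi.2]

lemma cover_vol {M m : ℕ} (hM : 1 ≤ M) (hm : 1 ≤ m) :
    volume (⋃ i : ℕ, Set.Ioo (1/(2*((m+i:ℕ):ℝ)+2 - cc M)) (1/(2*((m+i:ℕ):ℝ)+cc M)))
      ≤ ENNReal.ofReal (1/(((M:ℝ)+1)*(m:ℝ))) := by
  have ht1 := cc_half hM
  have ht2 := cc_lt_one M
  have hm1 : (1:ℝ) ≤ (m:ℝ) := by exact_mod_cast hm
  refine le_trans (measure_iUnion_le _) ?_
  have hlen : ∀ i : ℕ,
      volume (Set.Ioo (1/(2*((m+i:ℕ):ℝ)+2 - cc M)) (1/(2*((m+i:ℕ):ℝ)+cc M)))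
        ≤ ENNReal.ofReal ((1/(2*((M:ℝ)+1))) * (1/(((m:ℝ)+(i:ℝ))^2))) := by
    intro i
    rw [Real.volume_Ioo]
    apply ENNReal.ofReal_le_ofReal
    push_cast
    have hK : (1:ℝ) ≤ (m:ℝ)+(i:ℝ) := by
      have : (0:ℝ) ≤ (i:ℝ) := Nat.cast_nonneg i
      linarith
    have hA : (0:ℝ) < 2*((m:ℝ)+(i:ℝ))+cc M := by linarith [cc_nonneg M]
    have hB : (0:ℝ) < 2*((m:ℝ)+(i:ℝ))+2-cc M := by linarith
    have hMp : (0:ℝ) < (M:ℝ)+1 := by positivity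
    rw [div_sub_div 1 1 hA.ne' hB.ne']
    have hnum : 1*(2*((m:ℝ)+(i:ℝ))+2-cc M) - (2*((m:ℝ)+(i:ℝ))+cc M)*1 = 2-2*cc M := by ring
    rw [hnum]
    have h2t : 2-2*cc M = 2/((M:ℝ)+1) := by
      rw [cc]
      have h : ((M:ℝ)+1) ≠ 0 := by positivity
      field_simp
      ring
    rw [h2t, div_mul_div_comm, div_div, div_le_div_iff₀ (by positivity) (by positivity)]
    have key : 4*((m:ℝ)+(i:ℝ))^2 ≤ (2*((m:ℝ)+(i:ℝ))+cc M)*(2*((m:ℝ)+(i:ℝ))+2-cc M) := by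
      nlinarith [cc_nonneg M]
    nlinarith [key, hMp]
  refine le_trans (ENNReal.tsum_le_tsum hlen) ?_
  have heq : ∀ i : ℕ, ENNReal.ofReal ((1/(2*((M:ℝ)+1))) * (1/(((m:ℝ)+(i:ℝ))^2)))
      = ENNReal.ofReal (1/(2*((M:ℝ)+1))) * ENNReal.ofReal (1/(((m:ℝ)+(i:ℝ))^2)) :=
    fun i => ENNReal.ofReal_mul (by positivity)
  calc ∑' i : ℕ, ENNReal.ofReal ((1/(2*((M:ℝ)+1))) * (1/(((m:ℝ)+(i:ℝ))^2)))
      = ENNReal.ofReal (1/(2*((M:ℝ)+1))) * ∑' i : ℕ, ENNReal.ofReal (1/(((m:ℝ)+(i:ℝ))^2)) := by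
        rw [tsum_congr heq, ENNReal.tsum_mul_left]
    _ ≤ ENNReal.ofReal (1/(2*((M:ℝ)+1))) * ENNReal.ofReal (2/(m:ℝ)) :=
        mul_le_mul_right (tsum_invsq_tail m hm) _
    _ = ENNReal.ofReal ((1/(2*((M:ℝ)+1))) * (2/(m:ℝ))) := (ENNReal.ofReal_mul (by positivity)).symm
    _ = ENNReal.ofReal (1/(((M:ℝ)+1)*(m:ℝ))) := by
        congr 1
        have hMp : (0:ℝ) < (M:ℝ)+1 := by positivity
        have hmp : (0:ℝ) < (m:ℝ) := by linarith
        field_simp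

lemma phi_lower_subset {M : ℕ} (hM : 1 ≤ M) :
    Set.Ioo (1/(4 - cc M)) (1/3) ⊆ superLevelSet Tecf Eecf M := by
  intro x hx
  refine mem_super hM (k := 1) le_rfl ?_ ?_
  · have e : 2*((1:ℕ):ℝ)+2 - cc M = 4 - cc M := by push_cast; ring
    rw [e]; exact hx.1
  · have e : 2*((1:ℕ):ℝ)+1 = 3 := by push_cast; ring
    rw [e]; exact hx.2

lemma inter_lower_subset {M N a : ℕ} (hM : 1 ≤ M) (hN : 1 ≤ N) (ha1 : N ≤ a) (ha2 : a ≤ N+1) :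
    (⋃ k ∈ Finset.Icc N (2*N), Set.Ioo (1/(2*(k:ℝ)+2 - cc M)) (1/(2*(k:ℝ)+1)))
      ⊆ Set.Ioc 0 (1/(a:ℝ)) ∩ superLevelSet Tecf Eecf M := by
  intro x hx
  simp only [Set.mem_iUnion, Finset.mem_Icc] at hx
  obtain ⟨k, ⟨hkN, hk2N⟩, hmem⟩ := hx
  have hk1 : 1 ≤ k := by omega
  have hkr : (1:ℝ) ≤ (k:ℝ) := by exact_mod_cast hk1
  have hBpos : (0:ℝ) < 2*(k:ℝ)+2-cc M := by linarith [cc_lt_one M]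
  have hx0 : 0 < x := lt_trans (one_div_pos.2 hBpos) hmem.1
  refine ⟨⟨hx0, ?_⟩, mem_super hM hk1 hmem.1 hmem.2⟩
  have hak : (a:ℝ) ≤ 2*(k:ℝ)+1 := by
    have : (a:ℝ) ≤ ((2*k+1:ℕ):ℝ) := by exact_mod_cast (by omega : a ≤ 2*k+1)
    push_cast at this
    linarith
  have ha0 : (0:ℝ) < (a:ℝ) := by
    have : 1 ≤ a := by omega
    exact_mod_cast this
  calc x ≤ 1/(2*(k:ℝ)+1) := hmem.2.le
    _ ≤ 1/(a:ℝ) := one_div_le_one_div_of_le ha0 hak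

lemma inter_vol_lower {M N : ℕ} (hM : 1 ≤ M) (hN : 1 ≤ N) :
    ENNReal.ofReal (1/(36*((M:ℝ)+1)*(N:ℝ)))
      ≤ volume (⋃ k ∈ Finset.Icc N (2*N), Set.Ioo (1/(2*(k:ℝ)+2 - cc M)) (1/(2*(k:ℝ)+1))) := by
  have ht1 := cc_half hM
  have ht2 := cc_lt_one M
  have hN1 : (1:ℝ) ≤ (N:ℝ) := by exact_mod_cast hN
  have hMp : (0:ℝ) < (M:ℝ)+1 := by positivity
  have hdisj : (↑(Finset.Icc N (2*N)) : Set ℕ).PairwiseDisjoint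
      (fun k : ℕ => Set.Ioo (1/(2*(k:ℝ)+2 - cc M)) (1/(2*(k:ℝ)+1))) := by
    have key : ∀ p q : ℕ, p < q →
        Disjoint (Set.Ioo (1/(2*(p:ℝ)+2 - cc M)) (1/(2*(p:ℝ)+1)))
          (Set.Ioo (1/(2*(q:ℝ)+2 - cc M)) (1/(2*(q:ℝ)+1))) := by
      intro p q hpq
      apply Set.disjoint_left.2
      intro x hxp hxq
      have hp0 : (0:ℝ) ≤ (p:ℝ) := Nat.cast_nonneg p
      have hppos : (0:ℝ) < 2*(p:ℝ)+2-cc M := by linarith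
      have hpq' : (p:ℝ)+1 ≤ (q:ℝ) := by exact_mod_cast hpq
      have hle : 1/(2*(q:ℝ)+1) ≤ 1/(2*(p:ℝ)+2-cc M) :=
        one_div_le_one_div_of_le hppos (by linarith [cc_nonneg M])
      linarith [hxp.1, hxq.2]
    intro j hj k hk hne
    rcases hne.lt_or_gt with h | h
    · exact key j k h
    · exact (key k j h).symm
  rw [measure_biUnion_finset hdisj (fun b _ => measurableSet_Ioo)]
  have hterm : ∀ k ∈ Finset.Icc N (2*N),
      ENNReal.ofReal (1/(36*((M:ℝ)+1)*((N:ℝ))^2))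
        ≤ volume (Set.Ioo (1/(2*(k:ℝ)+2 - cc M)) (1/(2*(k:ℝ)+1))) := by
    intro k hk
    simp only [Finset.mem_Icc] at hk
    have hkN : (N:ℝ) ≤ (k:ℝ) := by exact_mod_cast hk.1
    have hk2N : (k:ℝ) ≤ 2*(N:ℝ) := by exact_mod_cast hk.2
    rw [Real.volume_Ioo]
    apply ENNReal.ofReal_le_ofReal
    have hk1 : (1:ℝ) ≤ (k:ℝ) := by linarith
    have hppos : (0:ℝ) < 2*(k:ℝ)+1 := by linarith
    have hBpos : (0:ℝ) < 2*(k:ℝ)+2-cc M := by linarith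
    have e : 1/(2*(k:ℝ)+1) - 1/(2*(k:ℝ)+2-cc M)
        = (1-cc M)/((2*(k:ℝ)+1)*(2*(k:ℝ)+2-cc M)) := by
      rw [div_sub_div _ _ hppos.ne' hBpos.ne']
      ring
    rw [e, div_le_div_iff₀ (by positivity) (by positivity)]
    have hprod : ((M:ℝ)+1)*(1-cc M) = 1 := by
      rw [h1t_eq M]
      field_simp
    have b1 : 2*(k:ℝ)+1 ≤ 6*(N:ℝ) := by linarith
    have b2 : 2*(k:ℝ)+2-cc M ≤ 6*(N:ℝ) := by linarith
    have bpos1 : (0:ℝ) ≤ 2*(k:ℝ)+1 := by linarith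
    have hmul := mul_le_mul b1 b2 (by linarith) (by positivity)
    nlinarith [hprod, hmul]
  calc ENNReal.ofReal (1/(36*((M:ℝ)+1)*(N:ℝ)))
      ≤ (Finset.Icc N (2*N)).card • ENNReal.ofReal (1/(36*((M:ℝ)+1)*((N:ℝ))^2)) := by
        have hcard : (Finset.Icc N (2*N)).card = N+1 := by
          rw [Nat.card_Icc]
          omega
        rw [hcard, nsmul_eq_mul]
        have : ((N+1:ℕ) : ENNReal) = ENNReal.ofReal ((N:ℝ)+1) := by
          rw [← ENNReal.ofReal_natCast]
          congr 1
          push_cast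
          ring
        rw [this, ← ENNReal.ofReal_mul (by positivity)]
        apply ENNReal.ofReal_le_ofReal
        rw [div_le_iff₀ (by positivity)]
        have e2 : ((N:ℝ)+1) * (1/(36*((M:ℝ)+1)*((N:ℝ))^2)) * (36*((M:ℝ)+1)*(N:ℝ))
            = ((N:ℝ)+1)*(N:ℝ)/((N:ℝ))^2 := by
          field_simp
        rw [e2]
        rw [le_div_iff₀ (by positivity)]
        nlinarith
    _ ≤ ∑ k ∈ Finset.Icc N (2*N),
          volume (Set.Ioo (1/(2*(k:ℝ)+2 - cc M)) (1/(2*(k:ℝ)+1))) :=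
        Finset.card_nsmul_le_sum _ _ _ hterm

lemma toReal_between {S : Set ℝ} {c b : ℝ} (hlo : ENNReal.ofReal c ≤ muECF S)
    (hup : muECF S ≤ ENNReal.ofReal b) (hb : 0 ≤ b) :
    c ≤ (muECF S).toReal ∧ (muECF S).toReal ≤ b := by
  have hfin : muECF S ≠ ⊤ := (lt_of_le_of_lt hup ENNReal.ofReal_lt_top).ne
  exact ⟨(ENNReal.ofReal_le_iff_le_toReal hfin).mp hlo, ENNReal.toReal_le_of_le_ofReal hb hup⟩

lemma my_div_le_div {A B C : ℝ} (hA : 0 ≤ A) (hC : 0 < C) (h : C ≤ B) : A/B ≤ A/C := by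
  have hB : 0 < B := lt_of_lt_of_le hC h
  rw [div_le_div_iff₀ hB hC]
  nlinarith

lemma final_algebra {L P Q R Mr Nr : ℝ} (hL : 0 < L) (hMr : 4 ≤ Mr) (hNr : 4 ≤ Nr)
    (hP1 : 1/(L*(2*Nr)) ≤ P) (hP2 : P ≤ 4/(3*L*Nr))
    (hQ1 : 1/(L*(12*(Mr+1))) ≤ Q) (hQ2 : Q ≤ 4/(3*L*(Mr+1)))
    (hR1 : 1/(L*(36*(Mr+1)*Nr)) ≤ R) (hR2 : R ≤ 16/(3*L*(Mr+1)*Nr)) :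
    (128*L + 64/L)⁻¹ * R ≤ P*Q ∧ P*Q ≤ (128*L + 64/L)*R := by
  have hMp : (0:ℝ) < Mr+1 := by linarith
  have hNp : (0:ℝ) < Nr := by linarith
  have h64 : 0 < 64/L := div_pos (by norm_num) hL
  have hC : 0 < 128*L + 64/L := by nlinarith
  have hp1 : (0:ℝ) < 1/(L*(2*Nr)) := one_div_pos.2 (by nlinarith)
  have hq1 : (0:ℝ) < 1/(L*(12*(Mr+1))) := one_div_pos.2 (by nlinarith)
  have hr1 : (0:ℝ) < 1/(L*(36*(Mr+1)*Nr)) := one_div_pos.2 (by nlinarith [mul_pos hMp hNp, mul_pos hL (mul_pos hMp hNp)])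
  have hP0 : 0 ≤ P := le_trans hp1.le hP1
  have hQ0 : 0 ≤ Q := le_trans hq1.le hQ1
  have hR0 : 0 ≤ R := le_trans hr1.le hR1
  have hLne : L ≠ 0 := hL.ne'
  have hMne : Mr+1 ≠ 0 := hMp.ne'
  have hNne : Nr ≠ 0 := hNp.ne'
  constructor
  · rw [inv_mul_le_iff₀ hC]
    calc R ≤ 16/(3*L*(Mr+1)*Nr) := hR2
      _ = (128*L)*(1/(L*(2*Nr)) * (1/(L*(12*(Mr+1))))) := by
          field_simp
          ring
      _ ≤ (128*L)*(P*Q) := by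
          apply mul_le_mul_of_nonneg_left ?_ (by nlinarith : (0:ℝ) ≤ 128*L)
          exact mul_le_mul hP1 hQ1 hq1.le hP0
      _ ≤ (128*L + 64/L)*(P*Q) :=
          mul_le_mul_of_nonneg_right (by linarith) (mul_nonneg hP0 hQ0)
  · calc P*Q ≤ (4/(3*L*Nr))*(4/(3*L*(Mr+1))) :=
          mul_le_mul hP2 hQ2 hQ0 (le_of_lt (div_pos (by norm_num) (by nlinarith [mul_pos hL hNp])))
      _ = (64/L)*(1/(L*(36*(Mr+1)*Nr))) := by
          field_simp
          ring
      _ ≤ (64/L)*R := mul_le_mul_of_nonneg_left hR1 h64.le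
      _ ≤ (128*L + 64/L)*R := mul_le_mul_of_nonneg_right (by nlinarith) hR0

lemma key_ineq (M N a : ℕ) (hM : 4 ≤ M) (hN : 4 ≤ N) (ha1 : N ≤ a) (ha2 : a ≤ N+1) :
    (128*Real.log (Real.sqrt 3) + 64/Real.log (Real.sqrt 3))⁻¹ *
        (muECF (Set.Ioc 0 (1/(a:ℝ)) ∩ superLevelSet Tecf Eecf M)).toReal ≤
      (muECF (Set.Ioc 0 (1/(a:ℝ)))).toReal * (muECF (superLevelSet Tecf Eecf M)).toReal ∧
    (muECF (Set.Ioc 0 (1/(a:ℝ)))).toReal * (muECF (superLevelSet Tecf Eecf M)).toReal ≤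
      (128*Real.log (Real.sqrt 3) + 64/Real.log (Real.sqrt 3)) *
        (muECF (Set.Ioc 0 (1/(a:ℝ)) ∩ superLevelSet Tecf Eecf M)).toReal := by
  have hL : 0 < Real.log (Real.sqrt 3) := logs3_pos
  have hLne : Real.log (Real.sqrt 3) ≠ 0 := hL.ne'
  have hMr : (4:ℝ) ≤ (M:ℝ) := by exact_mod_cast hM
  have hNr : (4:ℝ) ≤ (N:ℝ) := by exact_mod_cast hN
  have hMp : (0:ℝ) < (M:ℝ)+1 := by linarith
  have hNp : (0:ℝ) < (N:ℝ) := by linarith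
  have ha4 : (4:ℝ) ≤ (a:ℝ) := by exact_mod_cast (by omega : 4 ≤ a)
  have ha0 : (0:ℝ) < (a:ℝ) := by linarith
  have haN : (N:ℝ) ≤ (a:ℝ) := by exact_mod_cast ha1
  have haN2 : (a:ℝ) ≤ 2*(N:ℝ) := by
    have : (a:ℝ) ≤ (N:ℝ)+1 := by exact_mod_cast ha2
    linarith
  have ht1 := cc_half (show 1 ≤ M by omega)
  have ht2 := cc_lt_one M
  have hprod : ((M:ℝ)+1)*(1-cc M) = 1 := by
    rw [h1t_eq M]
    field_simp
  -- the Ioc set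
  have hGsub : Set.Ioc (0:ℝ) (1/(a:ℝ)) ⊆ Set.Icc 0 (1/2) := by
    intro x hx
    have h2 : 1/(a:ℝ) ≤ 1/2 := one_div_le_one_div_of_le (by norm_num) (by linarith)
    exact ⟨hx.1.le, le_trans hx.2 h2⟩
  have hvolG : volume (Set.Ioc (0:ℝ) (1/(a:ℝ))) = ENNReal.ofReal (1/(a:ℝ)) := by
    rw [Real.volume_Ioc, sub_zero]
  -- P bounds
  have hPlow : ENNReal.ofReal (1/(Real.log (Real.sqrt 3)*(2*(N:ℝ))))
      ≤ muECF (Set.Ioc 0 (1/(a:ℝ))) := by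
    refine le_trans ?_ (muECF_ge measurableSet_Ioc hGsub)
    rw [hvolG, ← ENNReal.ofReal_mul (by positivity)]
    apply ENNReal.ofReal_le_ofReal
    have e : (1/Real.log (Real.sqrt 3))*(1/(a:ℝ)) = 1/(Real.log (Real.sqrt 3)*(a:ℝ)) := by
      ring
    rw [e]
    exact my_div_le_div (by norm_num) (mul_pos hL ha0) (by nlinarith)
  have hPup : muECF (Set.Ioc 0 (1/(a:ℝ)))
      ≤ ENNReal.ofReal (4/(3*Real.log (Real.sqrt 3)*(N:ℝ))) := by
    refine le_trans (muECF_le measurableSet_Ioc hGsub) ?_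
    rw [hvolG, ← ENNReal.ofReal_mul (by positivity)]
    apply ENNReal.ofReal_le_ofReal
    have e : (4/(3*Real.log (Real.sqrt 3)))*(1/(a:ℝ))
        = 4/(3*Real.log (Real.sqrt 3)*(a:ℝ)) := by ring
    rw [e]
    exact my_div_le_div (by norm_num) (by nlinarith) (by nlinarith)
  -- Q bounds
  have hQup : muECF (superLevelSet Tecf Eecf M)
      ≤ ENNReal.ofReal (4/(3*Real.log (Real.sqrt 3)*((M:ℝ)+1))) := by
    calc muECF (superLevelSet Tecf Eecf M)
        ≤ muECF (⋃ i : ℕ, Set.Ioo (1/(2*((1+i:ℕ):ℝ)+2 - cc M)) (1/(2*((1+i:ℕ):ℝ)+cc M))) :=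
          measure_mono (super_subset_cover (by omega))
      _ ≤ ENNReal.ofReal (4/(3*Real.log (Real.sqrt 3))) *
            volume (⋃ i : ℕ, Set.Ioo (1/(2*((1+i:ℕ):ℝ)+2 - cc M)) (1/(2*((1+i:ℕ):ℝ)+cc M))) :=
          muECF_le (MeasurableSet.iUnion fun i => measurableSet_Ioo)
            (cover_subset_E (by omega) le_rfl)
      _ ≤ ENNReal.ofReal (4/(3*Real.log (Real.sqrt 3))) *
            ENNReal.ofReal (1/(((M:ℝ)+1)*((1:ℕ):ℝ))) :=
          mul_le_mul_right (cover_vol (by omega) le_rfl) _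
      _ = ENNReal.ofReal ((4/(3*Real.log (Real.sqrt 3))) * (1/(((M:ℝ)+1)*((1:ℕ):ℝ)))) :=
          (ENNReal.ofReal_mul (div_nonneg (by norm_num) (by nlinarith))).symm
      _ ≤ ENNReal.ofReal (4/(3*Real.log (Real.sqrt 3)*((M:ℝ)+1))) := by
          apply ENNReal.ofReal_le_ofReal
          apply le_of_eq
          rw [div_mul_div_comm]
          norm_num
  have hQlow : ENNReal.ofReal (1/(Real.log (Real.sqrt 3)*(12*((M:ℝ)+1))))
      ≤ muECF (superLevelSet Tecf Eecf M) := by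
    have hsub : Set.Ioo (1/(4 - cc M)) (1/3) ⊆ Set.Icc (0:ℝ) (1/2) := by
      intro x hx
      have hd : (0:ℝ) < 4 - cc M := by linarith
      have h0 : 0 < 1/(4-cc M) := one_div_pos.2 hd
      exact ⟨(lt_trans h0 hx.1).le, by linarith [hx.2]⟩
    calc ENNReal.ofReal (1/(Real.log (Real.sqrt 3)*(12*((M:ℝ)+1))))
        ≤ ENNReal.ofReal ((1/Real.log (Real.sqrt 3)) * (1/3 - 1/(4 - cc M))) := by
          apply ENNReal.ofReal_le_ofReal
          have hd : (0:ℝ) < 4 - cc M := by linarith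
          have e : 1/3 - 1/(4-cc M) = (1-cc M)/(3*(4-cc M)) := by
            rw [div_sub_div 1 1 (by norm_num : (3:ℝ) ≠ 0) hd.ne']
            congr 1
            ring
          rw [e]
          have hd2 : 1/(12*((M:ℝ)+1)) ≤ (1-cc M)/(3*(4-cc M)) := by
            rw [div_le_div_iff₀ (by positivity) (by positivity)]
            nlinarith
          have e2 : (1/Real.log (Real.sqrt 3)) * (1/(12*((M:ℝ)+1)))
              = 1/(Real.log (Real.sqrt 3)*(12*((M:ℝ)+1))) := by
            rw [div_mul_div_comm, one_mul]
          rw [← e2]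
          apply mul_le_mul_of_nonneg_left hd2 (by positivity)
      _ = ENNReal.ofReal (1/Real.log (Real.sqrt 3)) * ENNReal.ofReal (1/3 - 1/(4 - cc M)) :=
          ENNReal.ofReal_mul (div_nonneg (by norm_num) hL.le)
      _ = ENNReal.ofReal (1/Real.log (Real.sqrt 3)) * volume (Set.Ioo (1/(4 - cc M)) (1/3)) := by
          rw [Real.volume_Ioo]
      _ ≤ muECF (Set.Ioo (1/(4 - cc M)) (1/3)) := muECF_ge measurableSet_Ioo hsub
      _ ≤ muECF (superLevelSet Tecf Eecf M) :=
          measure_mono (phi_lower_subset (by omega))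
  -- R bounds
  have hRup : muECF (Set.Ioc 0 (1/(a:ℝ)) ∩ superLevelSet Tecf Eecf M)
      ≤ ENNReal.ofReal (16/(3*Real.log (Real.sqrt 3)*((M:ℝ)+1)*(N:ℝ))) := by
    have hm'4 : (N:ℝ) ≤ 4*((N/2:ℕ):ℝ) := by exact_mod_cast (by omega : N ≤ 4*(N/2))
    have hm'pos : (0:ℝ) < ((N/2:ℕ):ℝ) := by exact_mod_cast (by omega : 0 < N/2)
    calc muECF (Set.Ioc 0 (1/(a:ℝ)) ∩ superLevelSet Tecf Eecf M)
        ≤ muECF (⋃ i : ℕ, Set.Ioo (1/(2*((N/2+i:ℕ):ℝ)+2 - cc M)) (1/(2*((N/2+i:ℕ):ℝ)+cc M))) :=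
          measure_mono (inter_subset_cover (by omega) (by omega) ha1)
      _ ≤ ENNReal.ofReal (4/(3*Real.log (Real.sqrt 3))) *
            volume (⋃ i : ℕ, Set.Ioo (1/(2*((N/2+i:ℕ):ℝ)+2 - cc M)) (1/(2*((N/2+i:ℕ):ℝ)+cc M))) :=
          muECF_le (MeasurableSet.iUnion fun i => measurableSet_Ioo)
            (cover_subset_E (by omega) (by omega))
      _ ≤ ENNReal.ofReal (4/(3*Real.log (Real.sqrt 3))) *
            ENNReal.ofReal (1/(((M:ℝ)+1)*((N/2:ℕ):ℝ))) :=
          mul_le_mul_right (cover_vol (by omega) (by omega)) _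
      _ = ENNReal.ofReal ((4/(3*Real.log (Real.sqrt 3))) * (1/(((M:ℝ)+1)*((N/2:ℕ):ℝ)))) :=
          (ENNReal.ofReal_mul (div_nonneg (by norm_num) (by nlinarith))).symm
      _ ≤ ENNReal.ofReal (16/(3*Real.log (Real.sqrt 3)*((M:ℝ)+1)*(N:ℝ))) := by
          apply ENNReal.ofReal_le_ofReal
          have e : (4/(3*Real.log (Real.sqrt 3))) * (1/(((M:ℝ)+1)*((N/2:ℕ):ℝ)))
              = 4/(3*Real.log (Real.sqrt 3)*(((M:ℝ)+1)*((N/2:ℕ):ℝ))) := by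
            rw [div_mul_div_comm, mul_one]
          rw [e, div_le_div_iff₀
            (mul_pos (mul_pos (by norm_num : (0:ℝ) < 3) hL) (mul_pos hMp hm'pos))
            (mul_pos (mul_pos (mul_pos (by norm_num : (0:ℝ) < 3) hL) hMp) hNp)]
          have hpos3 : (0:ℝ) ≤ 3*Real.log (Real.sqrt 3)*((M:ℝ)+1) :=
            (mul_pos (mul_pos (by norm_num : (0:ℝ) < 3) hL) hMp).le
          have hint := mul_le_mul_of_nonneg_left hm'4 hpos3
          nlinarith [hint]
  have hRlow : ENNReal.ofReal (1/(Real.log (Real.sqrt 3)*(36*((M:ℝ)+1)*(N:ℝ))))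
      ≤ muECF (Set.Ioc 0 (1/(a:ℝ)) ∩ superLevelSet Tecf Eecf M) := by
    have hB2sub : (⋃ k ∈ Finset.Icc N (2*N), Set.Ioo (1/(2*(k:ℝ)+2 - cc M)) (1/(2*(k:ℝ)+1)))
        ⊆ Set.Icc (0:ℝ) (1/2) := by
      intro x hx
      have h := (inter_lower_subset (show 1 ≤ M by omega) (show 1 ≤ N by omega) ha1 ha2 hx).2
      exact h.1
    calc ENNReal.ofReal (1/(Real.log (Real.sqrt 3)*(36*((M:ℝ)+1)*(N:ℝ))))
        = ENNReal.ofReal ((1/Real.log (Real.sqrt 3)) * (1/(36*((M:ℝ)+1)*(N:ℝ)))) := by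
          congr 1
          rw [div_mul_div_comm, one_mul]
      _ = ENNReal.ofReal (1/Real.log (Real.sqrt 3)) *
            ENNReal.ofReal (1/(36*((M:ℝ)+1)*(N:ℝ))) := ENNReal.ofReal_mul (div_nonneg (by norm_num) hL.le)
      _ ≤ ENNReal.ofReal (1/Real.log (Real.sqrt 3)) *
            volume (⋃ k ∈ Finset.Icc N (2*N), Set.Ioo (1/(2*(k:ℝ)+2 - cc M)) (1/(2*(k:ℝ)+1))) :=
          mul_le_mul_right (inter_vol_lower (by omega) (by omega)) _
      _ ≤ muECF (⋃ k ∈ Finset.Icc N (2*N), Set.Ioo (1/(2*(k:ℝ)+2 - cc M)) (1/(2*(k:ℝ)+1))) :=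
          muECF_ge (MeasurableSet.biUnion (Finset.Icc N (2*N)).countable_toSet
            (fun b _ => measurableSet_Ioo)) hB2sub
      _ ≤ muECF (Set.Ioc 0 (1/(a:ℝ)) ∩ superLevelSet Tecf Eecf M) :=
          measure_mono (inter_lower_subset (by omega) (by omega) ha1 ha2)
  have hP := toReal_between hPlow hPup (by positivity)
  have hQ := toReal_between hQlow hQup (by positivity)
  have hR := toReal_between hRlow hRup (by positivity)
  exact final_algebra hL hMr hNr hP.1 hP.2 hQ.1 hQ.2 hR.1 hR.2

end Aux

/-- Lemma 5.4 (lem:aux2): asymptotic independence of `{γ > N}` and `{φ_E > M}`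
for the even-integer continued fraction map, for `γ ∈ {g, g̃}`. -/
theorem ecf_asymp_indep (γ : ℝ → ℝ) (hγ : γ = gECF ∨ γ = gtECF) :
    ∃ C : ℝ, 0 < C ∧ ∃ N₀ : ℕ, ∀ M N : ℕ, N₀ ≤ M → N₀ ≤ N →
      C⁻¹ * (muECF ({x | x ∈ Set.Icc (0:ℝ) 1 ∧ (N : ℝ) < γ x} ∩
          superLevelSet Tecf Eecf M)).toReal ≤
        (muECF {x | x ∈ Set.Icc (0:ℝ) 1 ∧ (N : ℝ) < γ x}).toReal *
          (muECF (superLevelSet Tecf Eecf M)).toReal ∧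
      (muECF {x | x ∈ Set.Icc (0:ℝ) 1 ∧ (N : ℝ) < γ x}).toReal *
          (muECF (superLevelSet Tecf Eecf M)).toReal ≤
        C * (muECF ({x | x ∈ Set.Icc (0:ℝ) 1 ∧ (N : ℝ) < γ x} ∩
          superLevelSet Tecf Eecf M)).toReal := by
  refine ⟨128*Real.log (Real.sqrt 3) + 64/Real.log (Real.sqrt 3), ?_, 4, ?_⟩
  · have hL := logs3_pos
    have h64 : 0 < 64/Real.log (Real.sqrt 3) := div_pos (by norm_num) hL
    nlinarith
  · intro M N hM hN
    rcases hγ with rfl | rfl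
    · rw [gset_eq_gECF N]
      exact key_ineq M N (2*(N/2)+1) hM hN (by omega) (by omega)
    · rw [gset_eq_gtECF N]
      exact key_ineq M N (N+1) hM hN (by omega) (by omega)

end InfErg

end
end

section
/- For the Backward Continued Fraction transformation T_BCF(x) = {1/(1−x)} on [0,1] with E = [1/2,1], the level set E_n := {x ∈ [0,1] : h_E(x) = n} of the hitting time h_E(x) := min{k ≥ 0 : T_BCF^k(x) ∈ E} equals the interval (1/(n+2), 1/(n+1)) up to sets of measure zero, and consequently μ(A_{>n}) = μ(E_n) = log₂(1 + 1/(n+1)) ~ 1/(n log 2) as n → ∞, where μ is the T_BCF-invariant measure with density 1/(x log 2) and A_{>n} = {x ∈ E : φ_E(x) > n} with φ_E the first return time to E. -/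
open MeasureTheory Filter Set Asymptotics

noncomputable section

namespace InfErg

variable {X : Type*} [MeasurableSpace X]

/-- The hitting-time level set `E_n = {x ∈ [0,1] : h_E(x) = n}` for `T_BCF`. -/
def bcfEn (n : ℕ) : Set ℝ :=
  {x | x ∈ Set.Icc (0:ℝ) 1 ∧ hitTime Tbcf Ebcf x = n}


/-- The fundamental intervals. -/
def Ibcf (n : ℕ) : Set ℝ := Set.Ioo (1 / ((n : ℝ) + 2)) (1 / ((n : ℝ) + 1))

lemma one_div_one_sub_lt {x c : ℝ} (hc : 0 < c) (h : x < 1 - 1/c) : 1/(1-x) < c := by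
  have h1 : 1/c < 1 - x := by linarith
  have h0 : (0:ℝ) < 1/c := by positivity
  have h2 : 0 < 1 - x := lt_trans h0 h1
  rw [div_lt_iff₀ h2]
  rw [div_lt_iff₀ hc] at h1
  nlinarith

lemma lt_one_div_one_sub {x c : ℝ} (hc : 0 < c) (hx : x < 1) (h : 1 - 1/c < x) :
    c < 1/(1-x) := by
  have h2 : 0 < 1 - x := by linarith
  have h1 : 1 - x < 1/c := by linarith
  rw [lt_div_iff₀ h2]
  rw [lt_div_iff₀ hc] at h1
  nlinarith

lemma lt_of_one_div_one_sub_lt {x c : ℝ} (hc : 0 < c) (hx2 : 0 < 1 - x)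
    (h : 1/(1-x) < c) : x < 1 - 1/c := by
  rw [div_lt_iff₀ hx2] at h
  have : 1/c < 1 - x := by rw [div_lt_iff₀ hc]; nlinarith
  linarith

lemma gt_of_lt_one_div_one_sub {x c : ℝ} (hc : 0 < c) (hx2 : 0 < 1 - x)
    (h : c < 1/(1-x)) : 1 - 1/c < x := by
  rw [lt_div_iff₀ hx2] at h
  have : 1 - x < 1/c := by rw [lt_div_iff₀ hc]; nlinarith
  linarith

lemma Tbcf_eq (x : ℝ) (K : ℕ) (h1 : (K:ℝ) ≤ 1/(1-x)) (h2 : 1/(1-x) < (K:ℝ) + 1) :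
    Tbcf x = 1/(1-x) - K := by
  have hf : ⌊1/(1-x)⌋ = (K:ℤ) := by
    rw [Int.floor_eq_iff]; constructor <;> push_cast <;> [exact h1; exact h2]
  unfold Tbcf Int.fract
  rw [hf]
  push_cast
  ring

lemma Tbcf_mem_Ibcf {n : ℕ} {x : ℝ} (h : x ∈ Ibcf (n+1)) : Tbcf x ∈ Ibcf n := by
  obtain ⟨h1, h2⟩ := h
  push_cast at h1 h2
  have hn0 : (0:ℝ) < (n:ℝ) + 1 := by positivity
  have hn2 : (0:ℝ) < (n:ℝ) + 2 := by positivity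
  have hn3 : (0:ℝ) < (n:ℝ) + 3 := by positivity
  have hx1 : 0 < x := lt_trans (by positivity) h1
  have hx2 : x < 1 := lt_of_lt_of_le h2 (by rw [div_le_one (by positivity)]; linarith)
  have idl : ((n:ℝ)+3)/((n:ℝ)+2) = 1 + 1/((n:ℝ)+2) := by field_simp; ring
  have idr : ((n:ℝ)+2)/((n:ℝ)+1) = 1 + 1/((n:ℝ)+1) := by field_simp; ring
  have hyl : ((n:ℝ)+3)/((n:ℝ)+2) < 1/(1-x) := by
    apply lt_one_div_one_sub (by positivity) hx2
    have : 1 - 1/(((n:ℝ)+3)/((n:ℝ)+2)) = 1/((n:ℝ)+1+2) := by rw [one_div_div]; field_simp; ring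
    rw [this]; exact h1
  have hyr : 1/(1-x) < ((n:ℝ)+2)/((n:ℝ)+1) := by
    apply one_div_one_sub_lt (by positivity)
    have : 1 - 1/(((n:ℝ)+2)/((n:ℝ)+1)) = 1/((n:ℝ)+1+1) := by rw [one_div_div]; field_simp; ring
    rw [this]; exact h2
  rw [idl] at hyl; rw [idr] at hyr
  have h12 : (0:ℝ) < 1/((n:ℝ)+2) := by positivity
  have h11 : 1/((n:ℝ)+1) ≤ 1 := by rw [div_le_one hn0]; linarith
  have key : Tbcf x = 1/(1-x) - 1 := by
    have := Tbcf_eq x 1 (by push_cast; linarith) (by push_cast; linarith)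
    simpa using this
  constructor
  · rw [key]; linarith
  · rw [key]; linarith

lemma iterate_mem_Ibcf (j : ℕ) : ∀ n : ℕ, ∀ x ∈ Ibcf (n + j), Tbcf^[j] x ∈ Ibcf n := by
  induction j with
  | zero => intro n x hx; simpa using hx
  | succ j ih =>
    intro n x hx
    rw [Function.iterate_succ_apply]
    exact ih n (Tbcf x) (Tbcf_mem_Ibcf hx)

lemma Ibcf_subset_Icc (n : ℕ) : Ibcf n ⊆ Icc (0:ℝ) 1 := by
  intro x ⟨h1, h2⟩
  constructor
  · have : (0:ℝ) < 1/((n:ℝ)+2) := by positivity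
    linarith
  · have : 1/((n:ℝ)+1) ≤ 1 := by
      rw [div_le_one (by positivity)]; push_cast; linarith [Nat.cast_nonneg (α := ℝ) n]
    linarith

lemma Ibcf_zero_subset : Ibcf 0 ⊆ Ebcf := by
  intro x ⟨h1, h2⟩
  norm_num at h1 h2
  exact ⟨by norm_num; linarith, by linarith⟩

lemma Ibcf_not_mem_Ebcf {n : ℕ} (hn : 1 ≤ n) {x : ℝ} (hx : x ∈ Ibcf n) : x ∉ Ebcf := by
  intro ⟨hE, _⟩
  have h2 := hx.2
  have : 1/((n:ℝ)+1) ≤ 1/2 := by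
    rw [div_le_div_iff₀ (by positivity) (by norm_num)]
    have : (1:ℝ) ≤ (n:ℝ) := by exact_mod_cast hn
    linarith
  linarith

lemma hitTime_Ibcf {n : ℕ} {x : ℝ} (hx : x ∈ Ibcf n) : hitTime Tbcf Ebcf x = n := by
  have hmem : ∀ j, j ≤ n → Tbcf^[j] x ∈ Ibcf (n - j) := by
    intro j hj
    exact iterate_mem_Ibcf j (n - j) x (by rwa [Nat.sub_add_cancel hj])
  have hn : Tbcf^[n] x ∈ Ebcf := Ibcf_zero_subset (by simpa using hmem n le_rfl)
  apply le_antisymm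
  · exact Nat.sInf_le hn
  · apply le_csInf ⟨n, hn⟩
    intro m hm
    by_contra h
    push_neg at h
    exact Ibcf_not_mem_Ebcf (n := n - m) (by omega) (hmem m h.le) hm

-- chunk 2 proper
lemma exists_mem_Ibcf {x : ℝ} (hx : x ∈ Ioo (0:ℝ) 1) (hirr : Irrational x) :
    ∃ n : ℕ, x ∈ Ibcf n := by
  obtain ⟨hx0, hx1⟩ := hx
  have hinv : 1 < 1/x := by rw [lt_div_iff₀ hx0]; linarith
  have hfl : 1 ≤ ⌊1/x⌋ := by
    rw [Int.le_floor]; exact_mod_cast hinv.le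
  set m : ℕ := ⌊1/x⌋.toNat with hm
  have hmc : ((m:ℤ):ℝ) = (⌊1/x⌋ : ℝ) := by
    rw [hm, Int.toNat_of_nonneg (by omega)]
  have hm1 : 1 ≤ m := by omega
  have hle : (m:ℝ) ≤ 1/x := by
    rw [show ((m:ℕ):ℝ) = ((m:ℤ):ℝ) from by push_cast; ring, hmc]
    exact Int.floor_le _
  have hne : (m:ℝ) ≠ 1/x := by
    intro hEq
    apply hirr
    exact ⟨(m:ℚ)⁻¹, by push_cast; rw [inv_eq_one_div, hEq, one_div_one_div]⟩
  have hltm : (m:ℝ) < 1/x := lt_of_le_of_ne hle hne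
  have hltm1 : 1/x < (m:ℝ) + 1 := by
    rw [show ((m:ℕ):ℝ) = ((m:ℤ):ℝ) from by push_cast; ring, hmc]
    exact Int.lt_floor_add_one _
  have hmpos : (0:ℝ) < m := by exact_mod_cast hm1
  refine ⟨m - 1, ?_, ?_⟩
  · have : ((m - 1 : ℕ):ℝ) + 2 = (m:ℝ) + 1 := by
      push_cast [Nat.cast_sub hm1]; ring
    rw [this, div_lt_iff₀ (by positivity)]
    rw [div_lt_iff₀ hx0] at hltm1
    nlinarith
  · have : ((m - 1 : ℕ):ℝ) + 1 = (m:ℝ) := by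
      push_cast [Nat.cast_sub hm1]; ring
    rw [this, lt_div_iff₀ hmpos]
    rw [lt_div_iff₀ hx0] at hltm
    nlinarith

lemma rat_set_countable : (({x : ℝ | ¬ Irrational x}) : Set ℝ).Countable := by
  have : {x : ℝ | ¬ Irrational x} = Set.range ((↑) : ℚ → ℝ) := by
    ext x; simp [Irrational]
  rw [this]
  exact Set.countable_range _

lemma part1 (n : ℕ) : volume
    ((bcfEn n \ Set.Ioo (1 / ((n : ℝ) + 2)) (1 / ((n : ℝ) + 1))) ∪
      (Set.Ioo (1 / ((n : ℝ) + 2)) (1 / ((n : ℝ) + 1)) \ bcfEn n)) = 0 := by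
  have h2 : Set.Ioo (1 / ((n : ℝ) + 2)) (1 / ((n : ℝ) + 1)) \ bcfEn n = ∅ := by
    rw [Set.diff_eq_empty]
    intro x hx
    exact ⟨Ibcf_subset_Icc n hx, hitTime_Ibcf hx⟩
  rw [h2, Set.union_empty]
  refine measure_mono_null ?_ (rat_set_countable.measure_zero _)
  rintro x ⟨⟨hxI, hxh⟩, hxn⟩
  by_contra hirr
  simp only [Set.mem_setOf_eq, not_not] at hirr
  have hx0 : x ≠ 0 := fun h => hirr.ne_rat 0 (by simp [h])
  have hx1 : x ≠ 1 := fun h => hirr.ne_rat 1 (by simp [h])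
  obtain ⟨m, hmem⟩ := exists_mem_Ibcf
    ⟨lt_of_le_of_ne hxI.1 (Ne.symm hx0), lt_of_le_of_ne hxI.2 hx1⟩ hirr
  have := hitTime_Ibcf hmem
  rw [hxh] at this
  rw [this] at hxn
  exact hxn hmem

lemma muBCF_null {s : Set ℝ} (hs : volume s = 0) : muBCF s = 0 := by
  have h1 : (volume.restrict (Set.Icc (0:ℝ) 1)) s = 0 :=
    le_antisymm (le_trans (Measure.restrict_le_self s) hs.le) zero_le
  exact (withDensity_absolutelyContinuous _ _) h1

lemma muBCF_congr {s t : Set ℝ} (h1 : volume (s \ t) = 0) (h2 : volume (t \ s) = 0) :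
    muBCF s = muBCF t :=
  measure_congr (MeasureTheory.ae_eq_set.mpr ⟨muBCF_null h1, muBCF_null h2⟩)

lemma muBCF_Ioo {a b : ℝ} (ha : 0 < a) (hab : a ≤ b) (hb : b ≤ 1) :
    muBCF (Ioo a b) = ENNReal.ofReal (Real.logb 2 (b/a)) := by
  have hsub : Ioo a b ⊆ Icc (0:ℝ) 1 := fun x hx => ⟨le_of_lt (lt_trans ha hx.1), le_trans hx.2.le hb⟩
  rw [muBCF, withDensity_apply _ measurableSet_Ioo,
      Measure.restrict_restrict measurableSet_Ioo, Set.inter_eq_self_of_subset_left hsub]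
  have hcont : ContinuousOn (fun x : ℝ => 1/(x * Real.log 2)) (Icc a b) := by
    apply ContinuousOn.div continuousOn_const
    · exact (continuousOn_id.mul continuousOn_const)
    · intro x hx
      have : 0 < x := lt_of_lt_of_le ha hx.1
      have h2 : (0:ℝ) < Real.log 2 := Real.log_pos (by norm_num)
      positivity
  have hint : IntegrableOn (fun x : ℝ => 1/(x * Real.log 2)) (Ioo a b) volume :=
    (hcont.integrableOn_Icc).mono_set Set.Ioo_subset_Icc_self
  rw [← ofReal_integral_eq_lintegral_ofReal hint]
  · congr 1
    rw [← integral_Ioc_eq_integral_Ioo, ← intervalIntegral.integral_of_le hab]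
    have hre : ∀ x : ℝ, 1/(x * Real.log 2) = (Real.log 2)⁻¹ * (1/x) := by
      intro x; field_simp
    simp_rw [hre]
    rw [intervalIntegral.integral_const_mul, integral_one_div]
    · rw [Real.logb]; ring
    · intro h
      rcases h with h
      simp only [Set.mem_uIcc] at h
      rcases h with ⟨h1, _⟩ | ⟨h1, _⟩ <;> linarith
  · filter_upwards [ae_restrict_mem measurableSet_Ioo] with x hx
    have hx0 : 0 < x := lt_trans ha hx.1
    have h2 : (0:ℝ) < Real.log 2 := Real.log_pos (by norm_num)
    positivity


def cbcf (n K : ℕ) : ℝ := 1 - ((n:ℝ)+1)/((K:ℝ)*((n:ℝ)+1)+1)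

def Jbcf (n k : ℕ) : Set ℝ := Set.Ioo (1 - 1/((k:ℝ)+2)) (cbcf n (k+2))

lemma cbcf_id (n K : ℕ) : ((n:ℝ)+1)/((K:ℝ)*((n:ℝ)+1)+1) = 1/((K:ℝ) + 1/((n:ℝ)+1)) := by
  rw [div_eq_div_iff (by positivity) (by positivity)]
  field_simp

lemma mem_J_props {n k : ℕ} {x : ℝ} (hx : x ∈ Jbcf n k) :
    x ∈ Ebcf ∧ Tbcf x ∈ Ioo (0:ℝ) (1/((n:ℝ)+1)) := by
  obtain ⟨hx1, hx2⟩ := hx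
  have hc : cbcf n (k+2) = 1 - ((n:ℝ)+1)/((((k:ℕ):ℝ)+2)*((n:ℝ)+1)+1) := by
    unfold cbcf; push_cast; ring_nf
  rw [hc] at hx2
  have hpos : (0:ℝ) < ((n:ℝ)+1)/((((k:ℕ):ℝ)+2)*((n:ℝ)+1)+1) := by positivity
  have hxlt1 : x < 1 := by linarith
  have h1x : 0 < 1 - x := by linarith
  have hxE : x ∈ Ebcf := by
    constructor
    · have : 1/((k:ℝ)+2) ≤ 1/2 := by
        rw [div_le_div_iff₀ (by positivity) (by norm_num)]
        linarith [Nat.cast_nonneg (α := ℝ) k]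
      linarith
    · linarith
  have hyl : ((k:ℝ)+2) < 1/(1-x) := lt_one_div_one_sub (by positivity) hxlt1 hx1
  have hyr : 1/(1-x) < ((k:ℝ)+2) + 1/((n:ℝ)+1) := by
    apply one_div_one_sub_lt (by positivity)
    have h2 := cbcf_id n (k+2)
    push_cast at h2
    rw [← h2]
    exact hx2
  have h1n : 1/((n:ℝ)+1) ≤ 1 := by
    rw [div_le_one (by positivity)]; linarith [Nat.cast_nonneg (α := ℝ) n]
  have hT : Tbcf x = 1/(1-x) - ((k:ℝ)+2) := by
    have := Tbcf_eq x (k+2) (by push_cast; linarith) (by push_cast; linarith)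
    push_cast at this
    linarith [this]
  exact ⟨hxE, by rw [hT]; linarith, by rw [hT]; linarith⟩

lemma returnTime_gt_s14 {n m : ℕ} {x : ℝ} (hm : n ≤ m) (hT : Tbcf x ∈ Ibcf m) :
    n < returnTime Tbcf Ebcf x := by
  have hmem : (m+1) ∈ {k : ℕ | 1 ≤ k ∧ Tbcf^[k] x ∈ Ebcf} := by
    refine ⟨by omega, ?_⟩
    rw [Function.iterate_succ_apply]
    exact Ibcf_zero_subset (iterate_mem_Ibcf m 0 _ (by simpa using hT))
  have hforall : ∀ j ∈ {k : ℕ | 1 ≤ k ∧ Tbcf^[k] x ∈ Ebcf}, n < j := by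
    rintro j ⟨hj1, hjE⟩
    by_contra h
    push_neg at h
    obtain ⟨i, rfl⟩ : ∃ i, j = i + 1 := ⟨j-1, by omega⟩
    rw [Function.iterate_succ_apply] at hjE
    have hmem2 : Tbcf^[i] (Tbcf x) ∈ Ibcf (m - i) :=
      iterate_mem_Ibcf i (m-i) _ (by rwa [Nat.sub_add_cancel (by omega)])
    exact Ibcf_not_mem_Ebcf (by omega) hmem2 hjE
  exact hforall _ (Nat.sInf_mem ⟨m+1, hmem⟩)

lemma irr_inv_one_sub {x : ℝ} (h : Irrational x) (hx : x < 1) : Irrational (1/(1-x)) := by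
  rintro ⟨q, hq⟩
  have h1x : (0:ℝ) < 1 - x := by linarith
  have hq0 : (q:ℝ) ≠ 0 := by rw [hq]; exact one_div_ne_zero (ne_of_gt h1x)
  apply h
  refine ⟨1 - q⁻¹, ?_⟩
  have hq0' : q ≠ 0 := fun hh => hq0 (by rw [hh]; simp)
  push_cast
  rw [hq, one_div, inv_inv]
  ring

lemma irr_Tbcf {x : ℝ} (h : Irrational x) (hx : x < 1) : Irrational (Tbcf x) := by
  have h1 := Irrational.sub_intCast (irr_inv_one_sub h hx) ⌊1/(1-x)⌋
  exact h1

lemma irr_ne_one {x : ℝ} (h : Irrational x) : x ≠ 1 :=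
  fun hh => (h.ne_int 1) (by rw [hh]; norm_num)

lemma superLevel_mem_J {n : ℕ} {x : ℝ} (hx : x ∈ superLevelSet Tbcf Ebcf n)
    (hirr : Irrational x) : ∃ k, x ∈ Jbcf n k := by
  obtain ⟨⟨hxl, hxr⟩, hret⟩ := hx
  have hxlt1 : x < 1 := lt_of_le_of_ne hxr (irr_ne_one hirr)
  have h1x : 0 < 1 - x := by linarith
  have hy2 : (2:ℝ) ≤ 1/(1-x) := by rw [le_div_iff₀ h1x]; linarith
  have hyirr : Irrational (1/(1-x)) := irr_inv_one_sub hirr hxlt1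
  have hfl2 : 2 ≤ ⌊1/(1-x)⌋ := by rw [Int.le_floor]; exact_mod_cast hy2
  set K : ℕ := ⌊1/(1-x)⌋.toNat with hKdef
  have hKZ : ((K:ℕ):ℤ) = ⌊1/(1-x)⌋ := Int.toNat_of_nonneg (by omega)
  have hKc : ((K:ℕ):ℝ) = ((⌊1/(1-x)⌋ : ℤ) : ℝ) := by exact_mod_cast congrArg (fun z : ℤ => (z:ℝ)) hKZ
  have hK2 : 2 ≤ K := by omega
  have hKy : (K:ℝ) < 1/(1-x) := by
    apply lt_of_le_of_ne (by rw [hKc]; exact Int.floor_le _)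
    intro hh
    exact hyirr ⟨(K:ℚ), by exact_mod_cast hh⟩
  have hyK1 : 1/(1-x) < (K:ℝ) + 1 := by
    rw [hKc]; exact Int.lt_floor_add_one _
  have hT : Tbcf x = 1/(1-x) - (K:ℝ) := Tbcf_eq x K hKy.le hyK1
  have hTirr : Irrational (Tbcf x) := irr_Tbcf hirr hxlt1
  have hT01 : Tbcf x ∈ Ioo (0:ℝ) 1 := by rw [hT]; constructor <;> linarith
  obtain ⟨m, hmI⟩ := exists_mem_Ibcf hT01 hTirr
  have hnm : n ≤ m := by
    by_contra h
    push_neg at h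
    have hle : returnTime Tbcf Ebcf x ≤ m + 1 := by
      apply Nat.sInf_le
      refine ⟨by omega, ?_⟩
      rw [Function.iterate_succ_apply]
      exact Ibcf_zero_subset (iterate_mem_Ibcf m 0 _ (by simpa using hmI))
    omega
  have hTlt : Tbcf x < 1/((n:ℝ)+1) := by
    apply lt_of_lt_of_le hmI.2
    apply one_div_le_one_div_of_le (by positivity)
    have : (n:ℝ) ≤ (m:ℝ) := by exact_mod_cast hnm
    linarith
  have hKpos : (0:ℝ) < (K:ℝ) := by positivity
  refine ⟨K - 2, ?_, ?_⟩
  · have hc : ((K - 2:ℕ):ℝ) + 2 = (K:ℝ) := by push_cast [Nat.cast_sub hK2]; ring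
    rw [hc]
    exact gt_of_lt_one_div_one_sub hKpos h1x hKy
  · show x < cbcf n ((K-2) + 2)
    rw [Nat.sub_add_cancel hK2]
    unfold cbcf
    rw [cbcf_id]
    apply lt_of_one_div_one_sub_lt (by positivity) h1x
    linarith

lemma J_mem_superLevel {n k : ℕ} {x : ℝ} (hx : x ∈ Jbcf n k) (hirr : Irrational x) :
    x ∈ superLevelSet Tbcf Ebcf n := by
  obtain ⟨hE, hT⟩ := mem_J_props hx
  have hxlt1 : x < 1 := lt_of_le_of_ne hE.2 (irr_ne_one hirr)
  have hTirr : Irrational (Tbcf x) := irr_Tbcf hirr hxlt1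
  have h1n : 1/((n:ℝ)+1) ≤ 1 := by
    rw [div_le_one (by positivity)]; linarith [Nat.cast_nonneg (α := ℝ) n]
  have hT01 : Tbcf x ∈ Ioo (0:ℝ) 1 := ⟨hT.1, lt_of_lt_of_le hT.2 h1n⟩
  obtain ⟨m, hm⟩ := exists_mem_Ibcf hT01 hTirr
  have hnm : n ≤ m := by
    by_contra h
    push_neg at h
    have h1 : 1/((m:ℝ)+2) < 1/((n:ℝ)+1) := lt_trans hm.1 hT.2
    rw [div_lt_div_iff₀ (by positivity) (by positivity)] at h1
    have : (m:ℝ) + 1 ≤ (n:ℝ) := by exact_mod_cast h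
    linarith
  exact ⟨hE, returnTime_gt_s14 hnm hm⟩

lemma J_left_pos (k : ℕ) : (0:ℝ) < 1 - 1/((k:ℝ)+2) := by
  have : 1/((k:ℝ)+2) ≤ 1/2 := by
    rw [div_le_div_iff₀ (by positivity) (by norm_num)]
    linarith [Nat.cast_nonneg (α := ℝ) k]
  linarith

lemma J_left_lt_c (n k : ℕ) : 1 - 1/((k:ℝ)+2) < cbcf n (k+2) := by
  unfold cbcf
  push_cast
  have h1 : ((n:ℝ)+1)/(((k:ℝ)+2)*((n:ℝ)+1)+1) < 1/((k:ℝ)+2) := by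
    rw [div_lt_div_iff₀ (by positivity) (by positivity)]
    nlinarith [Nat.cast_nonneg (α := ℝ) k, Nat.cast_nonneg (α := ℝ) n]
  linarith

lemma cbcf_le_next (n k : ℕ) : cbcf n (k+2) ≤ 1 - 1/((k:ℝ)+3) := by
  unfold cbcf
  push_cast
  have h1 : 1/((k:ℝ)+3) ≤ ((n:ℝ)+1)/(((k:ℝ)+2)*((n:ℝ)+1)+1) := by
    rw [div_le_div_iff₀ (by positivity) (by positivity)]
    nlinarith [Nat.cast_nonneg (α := ℝ) k, Nat.cast_nonneg (α := ℝ) n]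
  linarith

lemma cbcf_le_one (n k : ℕ) : cbcf n (k+2) ≤ 1 := by
  unfold cbcf
  have : (0:ℝ) ≤ ((n:ℝ)+1)/(((k+2:ℕ):ℝ)*((n:ℝ)+1)+1) := by positivity
  linarith

lemma J_disjoint (n : ℕ) : Pairwise (Function.onFun Disjoint (Jbcf n)) := by
  have key : ∀ i j : ℕ, i < j → Disjoint (Jbcf n i) (Jbcf n j) := by
    intro i j hij
    rw [Jbcf, Jbcf, Set.Ioo_disjoint_Ioo]
    apply le_trans (min_le_left _ _)
    apply le_trans (le_trans (cbcf_le_next n i) _) (le_max_right _ _)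
    have : 1/((j:ℝ)+2) ≤ 1/((i:ℝ)+3) := by
      apply one_div_le_one_div_of_le (by positivity)
      have : (i:ℝ) + 1 ≤ (j:ℝ) := by exact_mod_cast hij
      linarith
    linarith
  intro i j hij
  rcases lt_or_gt_of_ne hij with h | h
  · exact key i j h
  · exact (key j i h).symm

/-- summand of the branch decomposition -/
def tbr (n k : ℕ) : ℝ := Real.logb 2 (cbcf n (k+2) / (1 - 1/((k:ℝ)+2)))

lemma muBCF_J (n k : ℕ) : muBCF (Jbcf n k) = ENNReal.ofReal (tbr n k) :=
  muBCF_Ioo (J_left_pos k) (J_left_lt_c n k).le (cbcf_le_one n k)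

lemma tbr_nonneg (n k : ℕ) : 0 ≤ tbr n k := by
  apply Real.logb_nonneg (by norm_num)
  rw [le_div_iff₀ (J_left_pos k)]
  linarith [J_left_lt_c n k]

/-- partial product -/
def gbr (n M : ℕ) : ℝ := (((M:ℝ)+1)*((n:ℝ)+2))/(((M:ℝ)+1)*((n:ℝ)+1)+1)

lemma gbr_pos (n M : ℕ) : 0 < gbr n M := by unfold gbr; positivity

lemma tbr_partial_sum (n M : ℕ) :
    ∑ k ∈ Finset.range M, tbr n k = Real.logb 2 (gbr n M) := by
  induction M with
  | zero =>
    simp only [Finset.range_zero, Finset.sum_empty]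
    have : gbr n 0 = 1 := by
      unfold gbr
      rw [div_eq_one_iff_eq (by positivity)]
      push_cast; ring
    rw [this, Real.logb_one]
  | succ M ih =>
    rw [Finset.sum_range_succ, ih, tbr, ← Real.logb_mul (ne_of_gt (gbr_pos n M))
      (ne_of_gt (div_pos (lt_trans (J_left_pos M) (J_left_lt_c n M)) (J_left_pos M)))]
    congr 1
    have e1 : cbcf n (M+2) = (((M:ℝ)+1)*((n:ℝ)+1)+1)/(((M:ℝ)+2)*((n:ℝ)+1)+1) := by
      unfold cbcf
      push_cast
      rw [one_sub_div (by positivity : ((M:ℝ)+2)*((n:ℝ)+1)+1 ≠ 0)]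
      congr 1
      ring
    have e2 : 1 - 1/((M:ℝ)+2) = ((M:ℝ)+1)/((M:ℝ)+2) := by
      rw [one_sub_div (by positivity : ((M:ℝ)+2) ≠ 0)]
      congr 1
      ring
    rw [e1, e2]
    unfold gbr
    push_cast
    have h1 : ((M:ℝ)+1)*((n:ℝ)+1)+1 ≠ 0 := by positivity
    have h2 : ((M:ℝ)+2)*((n:ℝ)+1)+1 ≠ 0 := by positivity
    have h3 : ((M:ℝ)+1) ≠ 0 := by positivity
    have h4 : ((M:ℝ)+2) ≠ 0 := by positivity
    have h5 : ((M:ℝ)+1+1)*((n:ℝ)+1)+1 ≠ 0 := by positivity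
    field_simp
    ring

lemma tendsto_gbr (n : ℕ) :
    Tendsto (fun M : ℕ => gbr n M) atTop (nhds (((n:ℝ)+2)/((n:ℝ)+1))) := by
  have h0 : Tendsto (fun M : ℕ => 1/((M:ℝ)+1)) atTop (nhds 0) :=
    tendsto_one_div_add_atTop_nhds_zero_nat
  have h1 : Tendsto (fun M : ℕ => ((n:ℝ)+1) + 1/((M:ℝ)+1)) atTop (nhds ((n:ℝ)+1)) := by
    simpa using (tendsto_const_nhds (x := ((n:ℝ)+1)) (f := atTop)).add h0
  have h2 : Tendsto (fun M : ℕ => ((n:ℝ)+2) / (((n:ℝ)+1) + 1/((M:ℝ)+1))) atTop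
      (nhds (((n:ℝ)+2)/((n:ℝ)+1))) :=
    Tendsto.div tendsto_const_nhds h1 (by positivity)
  apply h2.congr
  intro M
  unfold gbr
  have h3 : ((M:ℝ)+1) ≠ 0 := by positivity
  have h4 : ((n:ℝ)+1) + 1/((M:ℝ)+1) ≠ 0 := by positivity
  field_simp

lemma tsum_tbr (n : ℕ) :
    (∑' k : ℕ, ENNReal.ofReal (tbr n k)) =
      ENNReal.ofReal (Real.logb 2 (((n:ℝ)+2)/((n:ℝ)+1))) := by
  have hL : (0:ℝ) < ((n:ℝ)+2)/((n:ℝ)+1) := by positivity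
  have hlog : Tendsto (fun M : ℕ => Real.logb 2 (gbr n M)) atTop
      (nhds (Real.logb 2 (((n:ℝ)+2)/((n:ℝ)+1)))) := by
    have hcont : ContinuousAt (Real.logb 2) (((n:ℝ)+2)/((n:ℝ)+1)) := by
      apply ContinuousAt.div_const
      exact Real.continuousAt_log (ne_of_gt hL)
    exact hcont.tendsto.comp (tendsto_gbr n)
  have h2 : Tendsto (fun M : ℕ => ∑ k ∈ Finset.range M, ENNReal.ofReal (tbr n k)) atTop
      (nhds (ENNReal.ofReal (Real.logb 2 (((n:ℝ)+2)/((n:ℝ)+1))))) := by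
    have := (ENNReal.continuous_ofReal.tendsto _).comp hlog
    apply this.congr
    intro M
    simp only [Function.comp_apply]
    rw [← tbr_partial_sum, ENNReal.ofReal_sum_of_nonneg (fun i _ => tbr_nonneg n i)]
  exact tendsto_nhds_unique (ENNReal.tendsto_nat_tsum _) h2

lemma part2 (n : ℕ) :
    muBCF (superLevelSet Tbcf Ebcf n) = ENNReal.ofReal (Real.logb 2 (((n:ℝ)+2)/((n:ℝ)+1))) := by
  have hU : muBCF (superLevelSet Tbcf Ebcf n) = muBCF (⋃ k, Jbcf n k) := by
    apply muBCF_congr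
    · apply measure_mono_null (t := {x : ℝ | ¬ Irrational x})
      · rintro x ⟨hx1, hx2⟩
        intro hirr
        obtain ⟨k, hk⟩ := superLevel_mem_J hx1 hirr
        exact hx2 (Set.mem_iUnion.mpr ⟨k, hk⟩)
      · exact rat_set_countable.measure_zero _
    · apply measure_mono_null (t := {x : ℝ | ¬ Irrational x})
      · rintro x ⟨hx1, hx2⟩
        intro hirr
        obtain ⟨k, hk⟩ := Set.mem_iUnion.mp hx1
        exact hx2 (J_mem_superLevel hk hirr)
      · exact rat_set_countable.measure_zero _
  rw [hU, measure_iUnion (J_disjoint n) (fun k => measurableSet_Ioo)]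
  simp_rw [muBCF_J]
  exact tsum_tbr n

lemma part3 (n : ℕ) : muBCF (bcfEn n) =
    ENNReal.ofReal (Real.logb 2 (1 + 1 / ((n : ℝ) + 1))) := by
  have h1 := measure_mono_null Set.subset_union_left (part1 n)
  have h2 := measure_mono_null Set.subset_union_right (part1 n)
  rw [muBCF_congr h1 h2]
  rw [muBCF_Ioo (by positivity)
    (one_div_le_one_div_of_le (by positivity) (by linarith))
    (by rw [div_le_one (by positivity)]; linarith [Nat.cast_nonneg (α := ℝ) n])]
  have harg : (1/((n:ℝ)+1))/(1/((n:ℝ)+2)) = 1 + 1/((n:ℝ)+1) := by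
    rw [div_div_div_comm]
    field_simp
    ring
  rw [harg]

lemma ratio_eq (n : ℕ) : ((n:ℝ)+2)/((n:ℝ)+1) = 1 + 1/((n:ℝ)+1) := by
  field_simp
  ring

lemma part4 : Tendsto (fun n : ℕ =>
    (muBCF (bcfEn n)).toReal * ((n : ℝ) * Real.log 2)) atTop (nhds 1) := by
  have hlog2 : Real.log 2 ≠ 0 := ne_of_gt (Real.log_pos (by norm_num))
  have hA : Tendsto (fun x : ℝ => x * Real.log (1+1/x)) atTop (nhds 1) := by
    simpa using Real.tendsto_mul_log_one_add_div_atTop 1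
  have hnat : Tendsto (fun n : ℕ => (n:ℝ)+1) atTop atTop :=
    tendsto_atTop_add_const_right _ 1 tendsto_natCast_atTop_atTop
  have hB : Tendsto (fun n : ℕ => ((n:ℝ)+1) * Real.log (1+1/((n:ℝ)+1))) atTop (nhds 1) :=
    hA.comp hnat
  have hC : Tendsto (fun n : ℕ => Real.log (1+1/((n:ℝ)+1))) atTop (nhds 0) := by
    have harg : Tendsto (fun n : ℕ => 1+1/((n:ℝ)+1)) atTop (nhds 1) := by
      simpa using (tendsto_const_nhds (x := (1:ℝ)) (f := (atTop : Filter ℕ))).add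
        tendsto_one_div_add_atTop_nhds_zero_nat
    have := (Real.continuousAt_log one_ne_zero).tendsto.comp harg
    simpa [Function.comp_def] using this
  have hD := hB.sub hC
  rw [sub_zero] at hD
  apply hD.congr
  intro n
  have hpos : (0:ℝ) < 1 + 1/((n:ℝ)+1) := by positivity
  have h1 : (muBCF (bcfEn n)).toReal = Real.logb 2 (1 + 1/((n:ℝ)+1)) := by
    rw [part3 n, ENNReal.toReal_ofReal]
    apply Real.logb_nonneg (by norm_num)
    have : (0:ℝ) ≤ 1/((n:ℝ)+1) := by positivity
    linarith
  rw [h1, Real.logb]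
  field_simp
  ring

/-- Equation (5.2) (eq: En): `E_n = (1/(n+2), 1/(n+1))` mod 0, and
`μ(A_{>n}) = μ(E_n) = log₂(1 + 1/(n+1)) ~ 1/(n log 2)`. -/
theorem bcf_hitting_level_sets :
    (∀ n : ℕ, volume
        ((bcfEn n \ Set.Ioo (1 / ((n : ℝ) + 2)) (1 / ((n : ℝ) + 1))) ∪
          (Set.Ioo (1 / ((n : ℝ) + 2)) (1 / ((n : ℝ) + 1)) \ bcfEn n)) = 0) ∧
    (∀ n : ℕ, muBCF (superLevelSet Tbcf Ebcf n) = muBCF (bcfEn n)) ∧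
    (∀ n : ℕ, muBCF (bcfEn n) =
      ENNReal.ofReal (Real.logb 2 (1 + 1 / ((n : ℝ) + 1)))) ∧
    Tendsto (fun n : ℕ =>
      (muBCF (bcfEn n)).toReal * ((n : ℝ) * Real.log 2)) atTop (nhds 1) := by
  refine ⟨part1, fun n => ?_, part3, part4⟩
  rw [part2 n, part3 n, ratio_eq n]

end InfErg

end
end

section
/- For the Backward Continued Fraction transformation T_BCF(x) = {1/(1−x)} on [0,1] with E = [1/2,1] and φ_E the first return time to E: for every n ≥ 1, the level set A_n = {x ∈ E : φ_E(x) = n} equals ⋃_{m=2}^∞ ( 1 − (n+1)/(mn+m+1), 1 − n/(mn+1) ) up to sets of measure zero, and for every M ≥ 0 the super-level set {x ∈ E : φ_E(x) > M} equals ⋃_{m=2}^∞ ( 1 − 1/m, 1 − (M+1)/(m(M+1)+1) ) up to sets of measure zero. -/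
open MeasureTheory Filter Set Asymptotics

noncomputable section

namespace InfErg

variable {X : Type*} [MeasurableSpace X]

/-- The candidate expression for the level set `A_n` of the first return time
of `T_BCF` to `E = [1/2,1]`. -/
def bcfAn (n : ℕ) : Set ℝ :=
  ⋃ m : ℕ, ⋃ (_ : 2 ≤ m),
    Set.Ioo (1 - ((n : ℝ) + 1) / ((m : ℝ) * (n : ℝ) + (m : ℝ) + 1))
      (1 - (n : ℝ) / ((m : ℝ) * (n : ℝ) + 1))

/-- The candidate expression for the super-level set `A_{>M}`. -/
def bcfAgt (M : ℕ) : Set ℝ :=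
  ⋃ m : ℕ, ⋃ (_ : 2 ≤ m),
    Set.Ioo (1 - 1 / (m : ℝ))
      (1 - ((M : ℝ) + 1) / ((m : ℝ) * ((M : ℝ) + 1) + 1))

lemma tbcf_small {z : ℝ} (h0 : 0 < z) (h1 : z < 1/2) : Tbcf z = z / (1 - z) := by
  have hd : 0 < 1 - z := by linarith
  have hfl : ⌊1/(1-z)⌋ = 1 := by
    rw [Int.floor_eq_iff]
    constructor
    · push_cast; rw [le_div_iff₀ hd]; linarith
    · push_cast; rw [div_lt_iff₀ hd]; linarith
  unfold Tbcf
  rw [show Int.fract (1/(1-z)) = 1/(1-z) - ⌊1/(1-z)⌋ from rfl, hfl]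
  push_cast
  field_simp
  ring

lemma tbcf_iter {y : ℝ} (hy : 0 < y) :
    ∀ k : ℕ, ((k:ℝ)+1) * y < 1 → Tbcf^[k] y = y / (1 - (k:ℝ) * y) := by
  intro k
  induction k with
  | zero => intro _; simp
  | succ k ih =>
    intro hk
    push_cast at hk
    have hkc : (0:ℝ) ≤ (k:ℝ) := Nat.cast_nonneg k
    have hk' : ((k:ℝ)+1) * y < 1 := by nlinarith
    rw [Function.iterate_succ_apply', ih hk']
    have hd : 0 < 1 - (k:ℝ)*y := by nlinarith
    have hz0 : 0 < y / (1 - (k:ℝ)*y) := div_pos hy hd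
    have hz2 : y / (1 - (k:ℝ)*y) < 1/2 := by
      rw [div_lt_div_iff₀ hd (by norm_num)]; nlinarith
    rw [tbcf_small hz0 hz2]
    have hd2 : 0 < 1 - ((k:ℝ)+1) * y := by nlinarith
    have e : (1:ℝ) - y/(1-(k:ℝ)*y) = (1-((k:ℝ)+1)*y)/(1-(k:ℝ)*y) := by
      rw [eq_div_iff hd.ne', sub_mul, div_mul_cancel₀ _ hd.ne']; ring
    rw [e, div_div_div_cancel_right₀ (ne_of_gt hd)]
    push_cast
    ring_nf

lemma returnTime_eq_of {x : ℝ} {n : ℕ} (hn : 1 ≤ n)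
    (hy1 : 1/((n:ℝ)+1) < Int.fract (1/(1-x)))
    (hy2 : Int.fract (1/(1-x)) < 1/(n:ℝ)) :
    returnTime Tbcf Ebcf x = n := by
  set y := Int.fract (1/(1-x)) with hy
  have hn0 : (0:ℝ) < n := by exact_mod_cast hn
  have hy0 : 0 < y := lt_trans (by positivity) hy1
  have hny : (n:ℝ) * y < 1 := by
    have := (lt_div_iff₀ hn0).mp hy2; linarith
  have hn1y : 1 < ((n:ℝ)+1) * y := by
    have := (div_lt_iff₀ (by positivity : (0:ℝ) < (n:ℝ)+1)).mp hy1; linarith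
  have hTx : Tbcf x = y := rfl
  have hiter : ∀ k : ℕ, k + 1 ≤ n → Tbcf^[k+1] x = y / (1 - (k:ℝ) * y) := by
    intro k hk
    rw [Function.iterate_succ_apply, hTx]
    apply tbcf_iter hy0
    have hc : ((k:ℝ)+1) ≤ (n:ℝ) := by exact_mod_cast hk
    nlinarith
  have hmem : n ∈ {k : ℕ | 1 ≤ k ∧ Tbcf^[k] x ∈ Ebcf} := by
    refine ⟨hn, ?_⟩
    obtain ⟨k, rfl⟩ : ∃ k, n = k + 1 := ⟨n-1, (Nat.succ_pred_eq_of_pos hn).symm⟩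
    rw [hiter k le_rfl]
    push_cast at hny hn1y
    have hd : 0 < 1 - (k:ℝ)*y := by nlinarith [Nat.cast_nonneg (α := ℝ) k]
    constructor
    · rw [le_div_iff₀ hd]; nlinarith
    · rw [div_le_one hd]; nlinarith
  have hlb : ∀ k ∈ {k : ℕ | 1 ≤ k ∧ Tbcf^[k] x ∈ Ebcf}, n ≤ k := by
    rintro k ⟨hk1, hkE⟩
    by_contra hlt
    push_neg at hlt
    obtain ⟨j, rfl⟩ : ∃ j, k = j + 1 := ⟨k-1, (Nat.succ_pred_eq_of_pos hk1).symm⟩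
    rw [hiter j (by omega)] at hkE
    have hjn : ((j:ℝ)+2) ≤ (n:ℝ) := by exact_mod_cast (by omega : j + 2 ≤ n)
    have hd : 0 < 1 - (j:ℝ)*y := by nlinarith [Nat.cast_nonneg (α := ℝ) j]
    have : (1:ℝ)/2 ≤ y / (1 - (j:ℝ)*y) := hkE.1
    rw [div_le_div_iff₀ (by norm_num) hd] at this
    nlinarith
  exact le_antisymm (Nat.sInf_le hmem) (le_csInf ⟨n, hmem⟩ hlb)

lemma bcfAn_subset {n : ℕ} (hn : 1 ≤ n) : bcfAn n ⊆ Set.Ioo (1/2:ℝ) 1 := by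
  intro x hx
  simp only [bcfAn, Set.mem_iUnion, Set.mem_Ioo] at hx
  obtain ⟨m, hm, ha, hb⟩ := hx
  have hm2 : (2:ℝ) ≤ m := by exact_mod_cast hm
  have hn1 : (1:ℝ) ≤ n := by exact_mod_cast hn
  have hd1 : (0:ℝ) < (m:ℝ)*n+m+1 := by nlinarith
  have hd2 : (0:ℝ) < (m:ℝ)*n+1 := by nlinarith
  constructor
  · have : ((n:ℝ)+1)/((m:ℝ)*n+m+1) ≤ 1/2 := by
      rw [div_le_div_iff₀ hd1 (by norm_num)]; nlinarith
    linarith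
  · have : (0:ℝ) < (n:ℝ)/((m:ℝ)*n+1) := by positivity
    linarith

lemma bcfAgt_subset {M : ℕ} : bcfAgt M ⊆ Set.Ioo (1/2:ℝ) 1 := by
  intro x hx
  simp only [bcfAgt, Set.mem_iUnion, Set.mem_Ioo] at hx
  obtain ⟨m, hm, ha, hb⟩ := hx
  have hm2 : (2:ℝ) ≤ m := by exact_mod_cast hm
  have hd2 : (0:ℝ) < (m:ℝ)*((M:ℝ)+1)+1 := by nlinarith [Nat.cast_nonneg (α := ℝ) M]
  constructor
  · have : (1:ℝ)/(m:ℝ) ≤ 1/2 := by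
      rw [div_le_div_iff₀ (by linarith) (by norm_num)]; linarith
    linarith
  · have : (0:ℝ) < ((M:ℝ)+1)/((m:ℝ)*((M:ℝ)+1)+1) := by
      positivity
    linarith

lemma t_bounds {x : ℝ} {m n : ℕ} (hm : 2 ≤ m) (hn : 1 ≤ n) (h2 : x < 1) :
    x ∈ Set.Ioo (1 - ((n:ℝ)+1)/((m:ℝ)*n+m+1)) (1 - (n:ℝ)/((m:ℝ)*n+1)) ↔
    ((m:ℝ) + 1/((n:ℝ)+1) < 1/(1-x) ∧ 1/(1-x) < (m:ℝ) + 1/(n:ℝ)) := by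
  have hu : 0 < 1 - x := by linarith
  have hm2 : (2:ℝ) ≤ m := by exact_mod_cast hm
  have hnn : (0:ℝ) < (n:ℝ) := by exact_mod_cast hn
  have hn1 : (0:ℝ) < (n:ℝ)+1 := by linarith
  have hd1 : (0:ℝ) < (m:ℝ)*n+m+1 := by nlinarith
  have hd2 : (0:ℝ) < (m:ℝ)*n+1 := by nlinarith
  have e1 : (m:ℝ) + 1/((n:ℝ)+1) = ((m:ℝ)*n+m+1)/((n:ℝ)+1) := by field_simp
  have e2 : (m:ℝ) + 1/(n:ℝ) = ((m:ℝ)*n+1)/(n:ℝ) := by field_simp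
  rw [Set.mem_Ioo, sub_lt_comm, lt_sub_comm, lt_div_iff₀ hd1, div_lt_iff₀ hd2,
      e1, e2, div_lt_div_iff₀ hn1 hu, div_lt_div_iff₀ hu hnn]
  constructor <;> rintro ⟨a, b⟩ <;> exact ⟨by nlinarith, by nlinarith⟩

lemma t_bounds' {x : ℝ} {m M : ℕ} (hm : 2 ≤ m) (h2 : x < 1) :
    x ∈ Set.Ioo (1 - 1/(m:ℝ)) (1 - ((M:ℝ)+1)/((m:ℝ)*((M:ℝ)+1)+1)) ↔
    ((m:ℝ) < 1/(1-x) ∧ 1/(1-x) < (m:ℝ) + 1/((M:ℝ)+1)) := by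
  have hu : 0 < 1 - x := by linarith
  have hm2 : (2:ℝ) ≤ m := by exact_mod_cast hm
  have hM0 : (0:ℝ) ≤ (M:ℝ) := Nat.cast_nonneg M
  have hM1 : (0:ℝ) < (M:ℝ)+1 := by linarith
  have hd2 : (0:ℝ) < (m:ℝ)*((M:ℝ)+1)+1 := by nlinarith
  have e1 : (m:ℝ) = (m:ℝ)/1 := by ring
  have e2 : (m:ℝ) + 1/((M:ℝ)+1) = ((m:ℝ)*((M:ℝ)+1)+1)/((M:ℝ)+1) := by field_simp
  rw [Set.mem_Ioo, sub_lt_comm, lt_sub_comm, lt_div_iff₀ (by linarith : (0:ℝ) < (m:ℝ)),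
      div_lt_iff₀ hd2, e2, div_lt_div_iff₀ hu hM1]
  constructor
  · rintro ⟨a, b⟩
    constructor
    · rw [lt_div_iff₀ hu]; nlinarith
    · nlinarith
  · rintro ⟨a, b⟩
    rw [lt_div_iff₀ hu] at a
    exact ⟨by nlinarith, by nlinarith⟩

lemma key {x : ℝ} (hx : Irrational x) (h1 : 1/2 < x) (h2 : x < 1) :
    ∃ m n : ℕ, 2 ≤ m ∧ 1 ≤ n ∧
      (m:ℝ) + 1/((n:ℝ)+1) < 1/(1-x) ∧ 1/(1-x) < (m:ℝ) + 1/(n:ℝ) ∧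
      returnTime Tbcf Ebcf x = n := by
  have hu : 0 < 1 - x := by linarith
  set t := 1/(1-x) with hts
  have ht : Irrational t := by
    have h1x : Irrational (1 - x) := by
      have := hx.ratCast_sub (q := 1); push_cast at this; exact this
    have := h1x.inv
    rwa [hts, one_div]
  have ht2 : 2 < t := by rw [hts, lt_div_iff₀ hu]; linarith
  set m := ⌊t⌋₊ with hm
  have hm2 : 2 ≤ m := Nat.le_floor (by exact_mod_cast ht2.le)
  have hmt : (m:ℝ) < t :=
    lt_of_le_of_ne (Nat.floor_le (by linarith)) (fun h => ht ⟨m, by push_cast; exact h⟩)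
  have hmt1 : t < m + 1 := Nat.lt_floor_add_one t
  have hfl : ⌊t⌋ = (m:ℤ) := by
    rw [Int.floor_eq_iff]
    constructor
    · push_cast; linarith
    · push_cast; linarith
  have hyeq : Int.fract t = t - m := by
    rw [show Int.fract t = t - ⌊t⌋ from rfl, hfl]; push_cast; ring
  set y := Int.fract t with hy
  have hy0 : 0 < y := by rw [hyeq]; linarith
  have hy1 : y < 1 := by rw [hyeq]; linarith
  have hyirr : Irrational y := by
    rw [hyeq]; exact ht.sub_natCast m
  have hinv : Irrational (1/y) := by rw [one_div]; exact hyirr.inv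
  set n := ⌊1/y⌋₊ with hn
  have h1y : 1 < 1/y := by rw [lt_div_iff₀ hy0]; linarith
  have hn1 : 1 ≤ n := Nat.le_floor (by exact_mod_cast h1y.le)
  have hnlt : (n:ℝ) < 1/y :=
    lt_of_le_of_ne (Nat.floor_le (by positivity)) (fun h => hinv ⟨n, by push_cast; exact h⟩)
  have hnlt1 : 1/y < n + 1 := Nat.lt_floor_add_one _
  have hny : (n:ℝ) * y < 1 := by
    have := (lt_div_iff₀ hy0).mp hnlt; linarith
  have hn1y : 1 < ((n:ℝ)+1) * y := by
    have := (div_lt_iff₀ hy0).mp hnlt1; linarith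
  have hb1 : 1/((n:ℝ)+1) < y := by
    rw [div_lt_iff₀ (by positivity : (0:ℝ) < (n:ℝ)+1)]; linarith
  have hb2 : y < 1/(n:ℝ) := by
    rw [lt_div_iff₀ (by exact_mod_cast hn1 : (0:ℝ) < (n:ℝ))]; linarith
  refine ⟨m, n, hm2, hn1, ?_, ?_, returnTime_eq_of hn1 hb1 hb2⟩
  · have : y = t - m := hyeq
    linarith [hb1, this]
  · have : y = t - m := hyeq
    linarith [hb2, this]

lemma ne_rat' {x : ℝ} (hx : Irrational x) (q : ℚ) (r : ℝ) (h : (q:ℝ) = r) : x ≠ r := by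
  rintro rfl; exact hx ⟨q, h⟩

lemma mem_interior_of_E {x : ℝ} (hx : Irrational x) (hE : x ∈ Ebcf) :
    1/2 < x ∧ x < 1 := by
  obtain ⟨ha, hb⟩ := hE
  constructor
  · exact lt_of_le_of_ne ha (Ne.symm (ne_rat' hx (1/2) (1/2) (by norm_num)))
  · exact lt_of_le_of_ne hb (ne_rat' hx 1 1 (by norm_num))

lemma mem_level_iff {x : ℝ} (hx : Irrational x) {n : ℕ} (hn : 1 ≤ n) :
    x ∈ levelSet Tbcf Ebcf n ↔ x ∈ bcfAn n := by
  constructor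
  · rintro ⟨hxE, hret⟩
    obtain ⟨h1, h2⟩ := mem_interior_of_E hx hxE
    obtain ⟨m, n₀, hm2, hn₀, hA, hB, hret₀⟩ := key hx h1 h2
    have hnn : n = n₀ := by rw [← hret, hret₀]
    subst hnn
    simp only [bcfAn, Set.mem_iUnion]
    exact ⟨m, hm2, (t_bounds hm2 hn₀ h2).mpr ⟨hA, hB⟩⟩
  · intro hmem
    obtain ⟨h1, h2⟩ := bcfAn_subset hn hmem
    simp only [bcfAn, Set.mem_iUnion] at hmem
    obtain ⟨m, hm2, hIoo⟩ := hmem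
    obtain ⟨hA, hB⟩ := (t_bounds hm2 hn h2).mp hIoo
    have hnn : (0:ℝ) < (n:ℝ) := by exact_mod_cast hn
    have hn1 : (0:ℝ) < (n:ℝ)+1 := by linarith
    have hfl : ⌊1/(1-x)⌋ = (m:ℤ) := by
      rw [Int.floor_eq_iff]
      have hp : (0:ℝ) < 1/((n:ℝ)+1) := by positivity
      have hq : 1/(n:ℝ) ≤ 1 := by
        rw [div_le_one hnn]; exact_mod_cast hn
      constructor
      · push_cast; linarith
      · push_cast; linarith
    have hyeq : Int.fract (1/(1-x)) = 1/(1-x) - m := by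
      rw [show Int.fract (1/(1-x)) = 1/(1-x) - ⌊1/(1-x)⌋ from rfl, hfl]; push_cast; ring
    have hb1 : 1/((n:ℝ)+1) < Int.fract (1/(1-x)) := by rw [hyeq]; linarith
    have hb2 : Int.fract (1/(1-x)) < 1/(n:ℝ) := by rw [hyeq]; linarith
    exact ⟨⟨h1.le, h2.le⟩, returnTime_eq_of hn hb1 hb2⟩

lemma mem_super_iff {x : ℝ} (hx : Irrational x) {M : ℕ} :
    x ∈ superLevelSet Tbcf Ebcf M ↔ x ∈ bcfAgt M := by
  have hM1 : (0:ℝ) < (M:ℝ)+1 := by positivity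
  constructor
  · rintro ⟨hxE, hret⟩
    obtain ⟨h1, h2⟩ := mem_interior_of_E hx hxE
    obtain ⟨m, n₀, hm2, hn₀, hA, hB, hret₀⟩ := key hx h1 h2
    rw [hret₀] at hret
    simp only [bcfAgt, Set.mem_iUnion]
    refine ⟨m, hm2, (t_bounds' hm2 h2).mpr ⟨?_, ?_⟩⟩
    · have : (0:ℝ) < 1/((n₀:ℝ)+1) := by positivity
      linarith
    · have hc : 1/(n₀:ℝ) ≤ 1/((M:ℝ)+1) := by
        apply one_div_le_one_div_of_le hM1
        exact_mod_cast hret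
      linarith
  · intro hmem
    obtain ⟨h1, h2⟩ := bcfAgt_subset hmem
    simp only [bcfAgt, Set.mem_iUnion] at hmem
    obtain ⟨m, hm2, hIoo⟩ := hmem
    obtain ⟨hA, hB⟩ := (t_bounds' hm2 h2).mp hIoo
    obtain ⟨m', n', hm2', hn', hA', hB', hret'⟩ := key hx h1 h2
    have hmm : m = m' := by
      have c1 : (m:ℝ) < (m':ℝ) + 1 := by
        have : (0:ℝ) < 1/((n':ℝ)+1) := by positivity
        have hq : 1/(n':ℝ) ≤ 1 := by
          rw [div_le_one (by exact_mod_cast hn' : (0:ℝ) < (n':ℝ))]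
          exact_mod_cast hn'
        linarith
      have c2 : (m':ℝ) < (m:ℝ) + 1 := by
        have : 1/((M:ℝ)+1) ≤ 1 := by
          rw [div_le_one hM1]; linarith [Nat.cast_nonneg (α := ℝ) M]
        have : (0:ℝ) < 1/((n':ℝ)+1) := by positivity
        linarith [hA', hB]
      have d1 : m < m' + 1 := by exact_mod_cast c1
      have d2 : m' < m + 1 := by exact_mod_cast c2
      omega
    subst hmm
    refine ⟨⟨h1.le, h2.le⟩, ?_⟩
    rw [hret']
    have hlt : 1/((n':ℝ)+1) < 1/((M:ℝ)+1) := by linarith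
    have : (M:ℝ)+1 < (n':ℝ)+1 := by
      have h := (div_lt_div_iff₀ (by positivity : (0:ℝ) < (n':ℝ)+1) hM1).mp hlt
      linarith
    have : (M:ℝ) < (n':ℝ) := by linarith
    exact_mod_cast this

/-- Explicit description (mod 0) of the return-time level sets for `T_BCF`. -/
theorem bcf_return_level_sets :
    (∀ n : ℕ, 1 ≤ n →
      volume ((levelSet Tbcf Ebcf n \ bcfAn n) ∪ (bcfAn n \ levelSet Tbcf Ebcf n)) = 0) ∧
    (∀ M : ℕ,
      volume ((superLevelSet Tbcf Ebcf M \ bcfAgt M) ∪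
        (bcfAgt M \ superLevelSet Tbcf Ebcf M)) = 0) := by
  have hrat : volume {x : ℝ | ¬ Irrational x} = 0 := by
    have he : {x : ℝ | ¬ Irrational x} = Set.range ((↑) : ℚ → ℝ) := by
      ext x; simp [Irrational]
    rw [he]
    exact (Set.countable_range _).measure_zero _
  constructor
  · intro n hn
    refine measure_mono_null ?_ hrat
    rintro x hxmem
    simp only [Set.mem_setOf_eq]
    intro hirr
    rcases hxmem with ⟨hA, hB⟩ | ⟨hA, hB⟩
    · exact hB ((mem_level_iff hirr hn).mp hA)
    · exact hB ((mem_level_iff hirr hn).mpr hA)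
  · intro M
    refine measure_mono_null ?_ hrat
    rintro x hxmem
    simp only [Set.mem_setOf_eq]
    intro hirr
    rcases hxmem with ⟨hA, hB⟩ | ⟨hA, hB⟩
    · exact hB ((mem_super_iff hirr).mp hA)
    · exact hB ((mem_super_iff hirr).mpr hA)

end InfErg

end
end
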